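/- arXiv:math/0510369 — 9 statements merged into one kernel-verified Lean document; each statement's English description precedes it below -/
import Mathlib

section
/- Let I be a set of integers and let a : I × I → ℤ be a family of integers. Suppose that for all i, j, k ∈ I the congruence a(i,j) + a(j,k) ≡ a(i,k) holds modulo the ideal of ℤ generated by i, j and k (equivalently, gcd(i, gcd(j, k)) divides a(i,j) + a(j,k) − a(i,k)). Then there exists a family x : I → ℤ such that for all i, j ∈ I one has x(j) − x(i) ≡ a(i,j) modulo the ideal generated by i and j (equivalently, gcd(i, j) divides x(j) − x(i) − a(i,j)). -/
/-!
Call a set of pairs `(i, xᵢ)` a partial solution if the required congruences hold among its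
pairs. Partial solutions are closed under unions of chains, so by Zorn's lemma there is a maximal
one. If `0 ∉ I` it is total: adding a new index `k` means solving `x ≡ xₚ + a(p, k)` modulo
`gcd(p, k)` for every `p` already present. These moduli are among the finitely many divisors of
`k`, and the cocycle condition makes the congruences pairwise compatible, so the Chinese remainder
theorem for non-coprime moduli (valid over ℤ because `gcd` distributes over `lcm`) solves them.
If `0 ∈ I`, then `xᵢ = a(0, i)` already works.
-/

theorem Int.gcd_natCast_natAbs_right (a b : ℤ) : Int.gcd a (b.natAbs : ℤ) = Int.gcd a b := rfl

theorem Nat.gcd_lcm_dvd_lcm_gcd (a b n : ℕ) : gcd (lcm a b) n ∣ lcm (gcd a n) (gcd b n) := by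
  rcases eq_or_ne n 0 with rfl | hn
  · simp
  rcases eq_or_ne a 0 with rfl | ha
  · simpa using dvd_lcm_left n (gcd b n)
  rcases eq_or_ne b 0 with rfl | hb
  · simpa using dvd_lcm_right (gcd a n) n
  have han := gcd_ne_zero_right (m := a) hn
  have hbn := gcd_ne_zero_right (m := b) hn
  rw [← factorization_le_iff_dvd (gcd_ne_zero_right hn) (lcm_ne_zero han hbn),
    factorization_gcd (lcm_ne_zero ha hb) hn, factorization_lcm ha hb, factorization_lcm han hbn,
    factorization_gcd ha hn, factorization_gcd hb hn]
  intro p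
  simp only [Finsupp.inf_apply, Finsupp.sup_apply]
  omega

theorem Finset.nat_gcd_lcm_dvd_lcm_gcd {ι : Type*} (s : Finset ι) (m : ι → ℕ) (n : ℕ) :
    Nat.gcd (s.lcm m) n ∣ s.lcm fun i ↦ Nat.gcd (m i) n := by
  classical
  induction s using Finset.induction_on with
  | empty => simp
  | insert i s _ ih =>
    rw [Finset.lcm_insert, Finset.lcm_insert]
    exact (Nat.gcd_lcm_dvd_lcm_gcd _ _ n).trans (lcm_dvd_lcm dvd_rfl ih)

theorem Int.exists_dvd_sub_and_dvd_sub {m n : ℕ} {u v : ℤ} (h : (Nat.gcd m n : ℤ) ∣ v - u) :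
    ∃ x : ℤ, (m : ℤ) ∣ x - u ∧ (n : ℤ) ∣ x - v := by
  obtain ⟨t, ht⟩ := h
  refine ⟨u + m * Nat.gcdA m n * t, ⟨Nat.gcdA m n * t, by ring⟩, ⟨-Nat.gcdB m n * t, ?_⟩⟩
  linear_combination -ht - t * Nat.gcd_eq_gcd_ab m n

theorem Int.exists_dvd_sub_of_finset {ι : Type*} (m : ι → ℕ) (c : ι → ℤ) (s : Finset ι)
    (hc : ∀ i ∈ s, ∀ j ∈ s, (Nat.gcd (m i) (m j) : ℤ) ∣ c j - c i) :
    ∃ x : ℤ, ∀ i ∈ s, (m i : ℤ) ∣ x - c i := by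
  classical
  induction s using Finset.induction_on with
  | empty => simp
  | insert k s _ ih =>
    obtain ⟨y, hy⟩ := ih fun i hi j hj ↦
      hc i (Finset.mem_insert_of_mem hi) j (Finset.mem_insert_of_mem hj)
    have hyk : (Nat.gcd (s.lcm m) (m k) : ℤ) ∣ c k - y := by
      refine Int.natCast_dvd.2 ((s.nat_gcd_lcm_dvd_lcm_gcd m (m k)).trans
        (Finset.lcm_dvd_iff.2 fun i hi ↦ Int.natCast_dvd.1 ?_))
      have hik := hc i (Finset.mem_insert_of_mem hi) k (Finset.mem_insert_self k s)
      have hyi := (Int.natCast_dvd_natCast.2 (Nat.gcd_dvd_left (m i) (m k))).trans (hy i hi)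
      rw [show c k - y = (c k - c i) - (y - c i) by ring]
      exact dvd_sub hik hyi
    obtain ⟨x, hxy, hxk⟩ := Int.exists_dvd_sub_and_dvd_sub hyk
    refine ⟨x, (Finset.forall_mem_insert _ _ _).2 ⟨hxk, fun i hi ↦ ?_⟩⟩
    have hmi : (m i : ℤ) ∣ x - y := (Int.natCast_dvd_natCast.2 (Finset.dvd_lcm hi)).trans hxy
    rw [show x - c i = (x - y) + (y - c i) by ring]
    exact dvd_add hmi (hy i hi)

theorem Int.exists_dvd_sub_of_finite_range {ι : Type*} (m : ι → ℕ) (c : ι → ℤ)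
    (hm : (Set.range m).Finite) (hc : ∀ i j, (Nat.gcd (m i) (m j) : ℤ) ∣ c j - c i) :
    ∃ x : ℤ, ∀ i, (m i : ℤ) ∣ x - c i := by
  have := hm.fintype
  let r := Set.rangeSplitting m
  obtain ⟨x, hx⟩ := Int.exists_dvd_sub_of_finset (m ∘ r) (c ∘ r) .univ
    fun d _ e _ ↦ hc (r d) (r e)
  refine ⟨x, fun i ↦ ?_⟩
  let d : Set.range m := ⟨m i, i, rfl⟩
  have hrd : m (r d) = m i := Set.apply_rangeSplitting m d
  have hxd : (m i : ℤ) ∣ x - c (r d) := hrd ▸ hx d (Finset.mem_univ d)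
  have hdi : (m i : ℤ) ∣ c i - c (r d) := by simpa [hrd] using hc (r d) i
  rw [show x - c i = (x - c (r d)) - (c i - c (r d)) by ring]
  exact dvd_sub hxd hdi

section IntegralCongruences

variable {I : Set ℤ}

def IsCocycleModGcd (a : I → I → ℤ) : Prop :=
  ∀ i j k : I, (Int.gcd (i : ℤ) (Int.gcd (j : ℤ) (k : ℤ)) : ℤ) ∣ a i j + a j k - a i k

/-- A partial solution is a relation rather than a partial function, so that a union of a chain
of partial solutions is again one without further ado. -/
def IsPartialSolution (a : I → I → ℤ) (S : Set (I × ℤ)) : Prop :=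
  ∀ p ∈ S, ∀ q ∈ S, (Int.gcd (p.1 : ℤ) (q.1 : ℤ) : ℤ) ∣ q.2 - p.2 - a p.1 q.1

variable {a : I → I → ℤ}

theorem IsCocycleModGcd.natAbs_dvd_diag (ha : IsCocycleModGcd a) (i : I) :
    ((i : ℤ).natAbs : ℤ) ∣ a i i := by
  have hiii := ha i i i
  rwa [Int.gcd_self, Int.gcd_natCast_natAbs_right, Int.gcd_self, add_sub_cancel_right] at hiii

theorem IsCocycleModGcd.gcd_dvd_add_swap (ha : IsCocycleModGcd a) (i j : I) :
    (Int.gcd (i : ℤ) (j : ℤ) : ℤ) ∣ a i j + a j i := by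
  have hiji := ha i j i
  rw [Int.gcd_gcd_self_right_right, Int.gcd_comm] at hiji
  have hii :=
    (Int.natCast_dvd_natCast.2 (Int.gcd_dvd_natAbs_left i j)).trans (ha.natAbs_dvd_diag i)
  rw [show a i j + a j i = (a i j + a j i - a i i) + a i i by ring]
  exact dvd_add hiji hii

theorem IsCocycleModGcd.exists_solution_of_zero_mem (ha : IsCocycleModGcd a) (h0 : (0 : ℤ) ∈ I) :
    ∃ x : I → ℤ, ∀ i j : I, (Int.gcd (i : ℤ) (j : ℤ) : ℤ) ∣ x j - x i - a i j := by
  let o : I := ⟨0, h0⟩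
  refine ⟨a o, fun i j ↦ ?_⟩
  have hioj := ha i o j
  have hoi := ha.gcd_dvd_add_swap o i
  rw [Int.gcd_zero_left, Int.gcd_natCast_natAbs_right] at hioj
  rw [Int.gcd_zero_left] at hoi
  have hoi' := (Int.natCast_dvd_natCast.2 (Int.gcd_dvd_natAbs_left i j)).trans hoi
  rw [show a o j - a o i - a i j = (a i o + a o j - a i j) - (a o i + a i o) by ring]
  exact dvd_sub hioj hoi'

theorem IsPartialSolution.sUnion_of_isChain {C : Set (Set (I × ℤ))}
    (hC : ∀ S ∈ C, IsPartialSolution a S) (hchain : IsChain (· ⊆ ·) C) :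
    IsPartialSolution a (⋃₀ C) := by
  rintro p ⟨S, hS, hpS⟩ q ⟨T, hT, hqT⟩
  rcases hchain.total hS hT with hST | hTS
  · exact hC T hT p (hST hpS) q hqT
  · exact hC S hS p hpS q (hTS hqT)

theorem IsPartialSolution.gcd_dvd_sub_add {S : Set (I × ℤ)} (hS : IsPartialSolution a S)
    (ha : IsCocycleModGcd a) (k : I) {p q : I × ℤ} (hp : p ∈ S) (hq : q ∈ S) :
    (Nat.gcd (Int.gcd p.1 k) (Int.gcd q.1 k) : ℤ) ∣ (q.2 + a q.1 k) - (p.2 + a p.1 k) := by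
  have hpq : Nat.gcd (Int.gcd p.1 k) (Int.gcd q.1 k) ∣ Int.gcd p.1 q.1 :=
    gcd_dvd_gcd (Nat.gcd_dvd_left _ _) (Nat.gcd_dvd_left _ _)
  have hpqk : Nat.gcd (Int.gcd p.1 k) (Int.gcd q.1 k) = Int.gcd p.1 (Int.gcd q.1 k) := by
    simp only [Int.gcd_def, Int.natAbs_natCast]
    ac_rfl
  rw [show (q.2 + a q.1 k) - (p.2 + a p.1 k)
      = (q.2 - p.2 - a p.1 q.1) + (a p.1 q.1 + a q.1 k - a p.1 k) by ring]
  exact dvd_add ((Int.natCast_dvd_natCast.2 hpq).trans (hS p hp q hq)) (hpqk ▸ ha p.1 q.1 k)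

theorem IsPartialSolution.exists_insert {S : Set (I × ℤ)} (hS : IsPartialSolution a S)
    (ha : IsCocycleModGcd a) {k : I} (hk : (k : ℤ) ≠ 0) :
    ∃ x : ℤ, IsPartialSolution a (insert (k, x) S) := by
  have hfin : (Set.range fun p : S ↦ Int.gcd p.1.1 k).Finite := by
    refine (k : ℤ).natAbs.divisors.finite_toSet.subset (Set.range_subset_iff.2 fun p ↦ ?_)
    exact Nat.mem_divisors.2 ⟨Int.gcd_dvd_natAbs_right _ _, Int.natAbs_ne_zero.2 hk⟩
  obtain ⟨x, hx⟩ := Int.exists_dvd_sub_of_finite_range _ (fun p : S ↦ p.1.2 + a p.1.1 k) hfin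
    fun p q ↦ hS.gcd_dvd_sub_add ha k p.2 q.2
  have hxS : ∀ p ∈ S, (Int.gcd p.1 k : ℤ) ∣ x - p.2 - a p.1 k := fun p hp ↦
    (sub_sub x p.2 _).symm ▸ hx ⟨p, hp⟩
  refine ⟨x, ?_⟩
  rintro p (rfl | hp) q (rfl | hq)
  · simpa [Int.gcd_self] using ha.natAbs_dvd_diag k
  · rw [Int.gcd_comm, show q.2 - x - a k q.1 = -(x - q.2 - a q.1 k) - (a q.1 k + a k q.1) by ring]
    exact dvd_sub (hxS q hq).neg_right (ha.gcd_dvd_add_swap q.1 k)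
  · exact hxS p hp
  · exact hS p hp q hq

end IntegralCongruences

/-- **Integral congruences, n = 1.**
Let `I` be a set of integers and `a : I × I → ℤ`. If for all `i, j, k ∈ I`
the gcd of `i, j, k` divides `a i j + a j k - a i k` (i.e. the congruence
`a(i,j) + a(j,k) ≡ a(i,k)` holds modulo the ideal `(i,j,k)`), then there is a
family `x : I → ℤ` with `x j - x i ≡ a i j` modulo the ideal `(i,j)`. -/
theorem integral_congruences_deg_one (I : Set ℤ) (a : I → I → ℤ)
    (h : ∀ i j k : I,
      (Int.gcd (i : ℤ) (Int.gcd (j : ℤ) (k : ℤ)) : ℤ) ∣ a i j + a j k - a i k) :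
    ∃ x : I → ℤ, ∀ i j : I, (Int.gcd (i : ℤ) (j : ℤ) : ℤ) ∣ x j - x i - a i j := by
  by_cases h0 : (0 : ℤ) ∈ I
  · exact IsCocycleModGcd.exists_solution_of_zero_mem h h0
  obtain ⟨M, hM⟩ := zorn_subset {S | IsPartialSolution a S} fun C hC hchain ↦
    ⟨⋃₀ C, IsPartialSolution.sUnion_of_isChain hC hchain, fun _ ↦ Set.subset_sUnion_of_mem⟩
  have htotal : ∀ k : I, ∃ u : ℤ, (k, u) ∈ M := fun k ↦ by
    obtain ⟨u, hu⟩ := hM.prop.exists_insert h (k := k) fun hk ↦ h0 (hk ▸ k.2)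
    exact ⟨u, hM.eq_of_subset hu (Set.subset_insert _ _) ▸ Set.mem_insert _ _⟩
  choose x hx using htotal
  exact ⟨x, fun i j ↦ hM.prop _ (hx i) _ (hx j)⟩
end

section
/- Let n be a positive integer, I a set of integers, and a a family of integers indexed by (n+1)-tuples (i₀, …, iₙ) ∈ I^{n+1}. Suppose that for all i₀, …, i_{n+1} ∈ I the alternating sum Σ_{j=0}^{n+1} (−1)^j a(i₀, …, î_j, …, i_{n+1}) (where î_j means that the entry i_j is omitted) lies in the ideal of ℤ generated by i₀, …, i_{n+1} (equivalently, is divisible by gcd(i₀, …, i_{n+1})). Then there exists a family x of integers indexed by n-tuples of elements of I such that for all i₀, …, iₙ ∈ I the difference Σ_{j=0}^{n} (−1)^j x(i₀, …, î_j, …, iₙ) − a(i₀, …, iₙ) lies in the ideal of ℤ generated by i₀, …, iₙ (equivalently, is divisible by gcd(i₀, …, iₙ)). -/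
/-!
Read `a` as a cochain on `I` with coboundary `δ`; the hypothesis says `δa ≡ 0` modulo the ideal
of the entries. Coning at a point `c`, `f ↦ f(c, ·)`, is a contracting homotopy:
`δ(f(c, ·)) = f - (δf)(c, ·)`. Hence `x = a(c, ·)` works modulo every ideal that contains `c` and
the entries, which settles the case `0 ∈ I`.

Otherwise work one prime `p` at a time. Pick `c₀, c₁, … ∈ I` with `c_M` divisible by `p^e`
(`e ≤ M`) whenever some element of `I` is, and chain the cones:
`X_N = a(c₀, ·) + ∑_{r<N} δa(c_r, c_{r+1}, ·)`. Then `δX_N = a - δa(c_N, ·)`, and on a tuple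
divisible by `p^e` the values `X_M` for `M ≥ e` agree modulo `p^e`. A tuple of `n > 0` nonzero
integers has a nonzero gcd, so only finitely many primes divide it, and the Chinese remainder
theorem glues the local values `X_{v_p(gcd)}` into `x`.
-/

open Finset

lemma Fin.removeNth_succ_cons {α : Type*} {m : ℕ} (c : α) (i : Fin (m + 1) → α)
    (j : Fin (m + 1)) :
    j.succ.removeNth (Fin.cons c i : Fin (m + 2) → α) = Fin.cons c (j.removeNth i) :=
  Fin.cons_comp_succ_succAbove c i j

lemma exists_forall_mem_of_antitone {β : Type*} (S : Set β) [Nonempty S] {J : ℕ → Set β}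
    (hJ : Antitone J) (M : ℕ) : ∃ c : S, ∀ e ≤ M, ∀ d : S, (d : β) ∈ J e → (c : β) ∈ J e := by
  classical
  by_cases h0 : ∃ d : S, (d : β) ∈ J 0
  · obtain ⟨c, hc⟩ :=
      Nat.findGreatest_spec (P := fun e => ∃ d : S, (d : β) ∈ J e) (Nat.zero_le M) h0
    exact ⟨c, fun e he d hd => hJ (Nat.le_findGreatest he ⟨d, hd⟩) hc⟩
  · exact ⟨Classical.arbitrary _, fun e _ d hd =>
      absurd (hJ (Nat.zero_le e) hd) (not_exists.1 h0 d)⟩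

lemma Ideal.antitone_span_singleton_pow {R : Type*} [CommSemiring R] (q : R) :
    Antitone fun e : ℕ => (Ideal.span {q ^ e} : Set R) := fun _ _ h =>
  Ideal.span_singleton_le_span_singleton.2 (pow_dvd_pow q h)

-- The exponent of `p` in a generator of `J`; it is `0` for `J = ⊥`.
open Submodule.IsPrincipal in
noncomputable def Ideal.ordAt (p : ℕ) (J : Ideal ℤ) : ℕ := (generator J).natAbs.factorization p

namespace Int

lemma le_span_pow_ordAt (p : ℕ) (J : Ideal ℤ) : J ≤ Ideal.span {(p : ℤ) ^ J.ordAt p} := by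
  conv_lhs => rw [← Submodule.IsPrincipal.span_singleton_generator J]
  rw [Ideal.submodule_span_eq, Ideal.span_singleton_le_span_singleton, ← Int.natCast_pow,
    Int.natCast_dvd]
  exact Nat.ordProj_dvd _ _

lemma le_ordAt_of_le_span_pow {p e : ℕ} (hp : p.Prime) {J : Ideal ℤ} (hJ : J ≠ ⊥)
    (h : J ≤ Ideal.span {(p : ℤ) ^ e}) : e ≤ J.ordAt p := by
  rw [← Submodule.IsPrincipal.span_singleton_generator J, Ideal.submodule_span_eq,
    Ideal.span_singleton_le_span_singleton, ← Int.natCast_pow, Int.natCast_dvd] at h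
  refine (hp.pow_dvd_iff_le_factorization ?_).1 h
  rwa [Int.natAbs_ne_zero, ne_eq, ← Submodule.IsPrincipal.eq_bot_iff_generator_eq_zero]

lemma mem_iff_forall_le_span_prime_pow (J : Ideal ℤ) (z : ℤ) :
    z ∈ J ↔ ∀ p e : ℕ, p.Prime → J ≤ Ideal.span {(p : ℤ) ^ e} →
      z ∈ Ideal.span {(p : ℤ) ^ e} := by
  obtain ⟨g, rfl⟩ : ∃ g : ℕ, J = Ideal.span {(g : ℤ)} := by
    refine ⟨(Submodule.IsPrincipal.generator J).natAbs, ?_⟩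
    rw [span_natAbs, ← Ideal.submodule_span_eq,
      Submodule.IsPrincipal.span_singleton_generator]
  simp only [Ideal.mem_span_singleton, Ideal.span_singleton_le_span_singleton, ← Int.natCast_pow,
    Int.natCast_dvd]
  exact Nat.dvd_iff_prime_pow_dvd_dvd _ _

lemma exists_forall_sub_mem_span_pow_factorization (g : ℕ) (y : ℕ → ℤ) :
    ∃ z : ℤ, ∀ p : ℕ, z - y p ∈ Ideal.span {(p : ℤ) ^ g.factorization p} := by
  have hcop : Pairwise (Function.onFun IsCoprime
      fun p : g.primeFactors => Ideal.span {(p : ℤ) ^ g.factorization p}) := by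
    intro p q hpq
    rw [Function.onFun, Ideal.isCoprime_span_singleton_iff, ← Int.natCast_pow, ← Int.natCast_pow,
      Nat.isCoprime_iff_coprime]
    exact Nat.Coprime.pow _ _ ((Nat.coprime_primes (Nat.prime_of_mem_primeFactors p.2)
      (Nat.prime_of_mem_primeFactors q.2)).2 (Subtype.coe_ne_coe.2 hpq))
  obtain ⟨z, hz⟩ := Ideal.exists_forall_sub_mem_ideal hcop fun p => y p
  refine ⟨z, fun p => ?_⟩
  by_cases hp : p ∈ g.primeFactors
  · exact hz ⟨p, hp⟩
  · rw [← Nat.support_factorization, Finsupp.notMem_support_iff] at hp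
    simp [hp]

lemma exists_forall_sub_mem_span_pow_ordAt (J : Ideal ℤ) (y : ℕ → ℤ) :
    ∃ z : ℤ, ∀ p : ℕ, z - y p ∈ Ideal.span {(p : ℤ) ^ J.ordAt p} :=
  exists_forall_sub_mem_span_pow_factorization _ y

end Int

namespace TupleCochain

variable {α R : Type*} {m : ℕ}

def cone (c : α) (f : (Fin (m + 1) → α) → R) : (Fin m → α) → R :=
  fun k => f (Fin.cons c k)

@[simp]
lemma cone_apply (c : α) (f : (Fin (m + 1) → α) → R) (k : Fin m → α) :
    cone c f k = f (Fin.cons c k) := rfl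

@[simp]
lemma cone_zero [Zero R] (c : α) : cone c (0 : (Fin (m + 1) → α) → R) = 0 := rfl

section Ring

variable [Ring R]

def coboundary : ((Fin m → α) → R) →+ ((Fin (m + 1) → α) → R) where
  toFun f i := ∑ j : Fin (m + 1), (-1 : R) ^ (j : ℕ) * f (j.removeNth i)
  map_zero' := by ext; simp
  map_add' f g := by ext; simp [mul_add, sum_add_distrib]

lemma coboundary_apply (f : (Fin m → α) → R) (i : Fin (m + 1) → α) :
    coboundary f i = ∑ j : Fin (m + 1), (-1 : R) ^ (j : ℕ) * f (j.removeNth i) := rfl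

lemma coboundary_cone (c : α) (f : (Fin (m + 1) → α) → R) :
    coboundary (cone c f) = f - cone c (coboundary f) := by
  funext i
  simp [coboundary_apply, Fin.sum_univ_succ (n := m + 1), Fin.removeNth_succ_cons, pow_succ]

-- Writing the tuple as `(c, t)`, the cone identity turns `δδf (c, t)` into `δδ(f(c, ·)) t`.
theorem coboundary_coboundary : ∀ {m : ℕ} (f : (Fin m → α) → R), coboundary (coboundary f) = 0
  | 0, f => by
    funext i
    simp [coboundary_apply, Fin.sum_univ_two,
      Subsingleton.elim (Fin.tail (Fin.tail i)) (Fin.tail (Fin.removeNth 1 i))]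
  | m + 1, f => by
    funext i
    rw [← Fin.cons_self_tail i]
    have hcone : cone (i 0) (coboundary f) = f - coboundary (cone (i 0) f) := by
      rw [coboundary_cone]; abel
    have h := coboundary_cone (i 0) (coboundary f)
    rw [hcone, map_sub, coboundary_coboundary, sub_zero, eq_comm, sub_eq_self] at h
    exact congrFun h (Fin.tail i)

def coneChain (c : ℕ → α) (a : (Fin (m + 1) → α) → R) (N : ℕ) : (Fin m → α) → R :=
  cone (c 0) a + ∑ r ∈ range N, cone (c (r + 1)) (cone (c r) (coboundary a))

lemma coneChain_sub_coneChain (c : ℕ → α) (a : (Fin (m + 1) → α) → R) {e M : ℕ} (h : e ≤ M) :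
    coneChain c a M - coneChain c a e =
      ∑ r ∈ Ico e M, cone (c (r + 1)) (cone (c r) (coboundary a)) := by
  rw [sum_Ico_eq_sub _ h, coneChain, coneChain, add_sub_add_left_eq_sub]

theorem coboundary_coneChain (c : ℕ → α) (a : (Fin (m + 1) → α) → R) (N : ℕ) :
    coboundary (coneChain c a N) = a - cone (c N) (coboundary a) := by
  induction N with
  | zero => simp [coneChain, coboundary_cone]
  | succ N ih =>
    have hstep : coneChain c a (N + 1) =
        coneChain c a N + cone (c (N + 1)) (cone (c N) (coboundary a)) := by
      rw [coneChain, coneChain, sum_range_succ]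
      exact (add_assoc _ _ _).symm
    rw [hstep, map_add, ih, coboundary_cone, coboundary_cone, coboundary_coboundary,
      cone_zero, sub_zero]
    abel

end Ring

section CommRing

variable [CommRing R] {I : Set R}

def entrySpan (t : Fin m → I) : Ideal R := Ideal.span (Set.range fun k => (t k : R))

lemma entrySpan_le_iff {t : Fin m → I} {J : Ideal R} : entrySpan t ≤ J ↔ ∀ k, (t k : R) ∈ J := by
  rw [entrySpan, Ideal.span_le, Set.range_subset_iff]
  rfl

lemma entrySpan_cons_le {c : I} {t : Fin m → I} {J : Ideal R} (hc : (c : R) ∈ J)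
    (ht : entrySpan t ≤ J) : entrySpan (Fin.cons c t : Fin (m + 1) → I) ≤ J :=
  entrySpan_le_iff.2 (Fin.cases hc (entrySpan_le_iff.1 ht))

lemma entrySpan_removeNth_le (i : Fin (m + 1) → I) (j : Fin (m + 1)) :
    entrySpan (j.removeNth i) ≤ entrySpan i :=
  Ideal.span_mono (Set.range_comp_subset_range j.succAbove fun k => (i k : R))

variable {a : (Fin (m + 1) → I) → R} {J : Ideal R} {c : ℕ → I}

lemma coneChain_sub_coneChain_mem (ha : ∀ t, coboundary a t ∈ entrySpan t) {e M : ℕ}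
    (heM : e ≤ M) (hc : ∀ r, e ≤ r → (c r : R) ∈ J)
    {k : Fin m → I} (hk : entrySpan k ≤ J) : coneChain c a M k - coneChain c a e k ∈ J := by
  rw [← Pi.sub_apply, coneChain_sub_coneChain c a heM, Finset.sum_apply]
  refine J.sum_mem fun r hr => ?_
  have her : e ≤ r := (Finset.mem_Ico.1 hr).1
  exact entrySpan_cons_le (hc r her) (entrySpan_cons_le (hc (r + 1) (by omega)) hk) (ha _)

lemma coboundary_coneChain_sub_mem (ha : ∀ t, coboundary a t ∈ entrySpan t) {N : ℕ}
    (hc : (c N : R) ∈ J) {i : Fin (m + 1) → I}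
    (hi : entrySpan i ≤ J) : coboundary (coneChain c a N) i - a i ∈ J := by
  rw [coboundary_coneChain, Pi.sub_apply, cone_apply, sub_sub_cancel_left]
  exact J.neg_mem (entrySpan_cons_le hc hi (ha _))

theorem exists_coboundary_sub_mem_of_zero_mem (ha : ∀ t, coboundary a t ∈ entrySpan t)
    (h0 : (0 : R) ∈ I) :
    ∃ x : (Fin m → I) → R, ∀ i, coboundary x i - a i ∈ entrySpan i :=
  ⟨coneChain (fun _ => ⟨0, h0⟩) a 0, fun i =>
    coboundary_coneChain_sub_mem ha (J := entrySpan i) (Ideal.zero_mem _) le_rfl⟩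

end CommRing

lemma entrySpan_ne_bot {I : Set ℤ} (h0 : (0 : ℤ) ∉ I) (k : Fin (m + 1) → I) :
    entrySpan k ≠ ⊥ := fun h =>
  h0 (Ideal.mem_bot.1 (entrySpan_le_iff.1 h.le 0) ▸ (k 0).2)

theorem exists_coboundary_sub_mem_of_zero_notMem {I : Set ℤ} (h0 : (0 : ℤ) ∉ I)
    {a : (Fin (m + 2) → I) → ℤ} (ha : ∀ t, coboundary a t ∈ entrySpan t) :
    ∃ x : (Fin (m + 1) → I) → ℤ, ∀ i, coboundary x i - a i ∈ entrySpan i := by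
  rcases isEmpty_or_nonempty I with _ | _
  · exact ⟨0, fun i => isEmptyElim (i 0)⟩
  choose c hc using fun p M : ℕ =>
    exists_forall_mem_of_antitone I (Ideal.antitone_span_singleton_pow (p : ℤ)) M
  choose x hx using fun k : Fin (m + 1) → I => Int.exists_forall_sub_mem_span_pow_ordAt
    (entrySpan k) fun p => coneChain (c p) a ((entrySpan k).ordAt p) k
  refine ⟨x, fun i => (Int.mem_iff_forall_le_span_prime_pow _ _).2 fun p e hp hi => ?_⟩
  set E : Fin (m + 2) → ℕ := fun j => (entrySpan (j.removeNth i)).ordAt p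
  set N := ∑ j, E j
  have heE : ∀ j, e ≤ E j := fun j => Int.le_ordAt_of_le_span_pow hp (entrySpan_ne_bot h0 _)
    ((entrySpan_removeNth_le i j).trans hi)
  have hEN : ∀ j, E j ≤ N := fun j => single_le_sum (fun _ _ => Nat.zero_le _) (mem_univ j)
  have hface : ∀ j : Fin (m + 2), x (j.removeNth i) - coneChain (c p) a N (j.removeNth i) ∈
      Ideal.span {(p : ℤ) ^ e} := by
    intro j
    have hk := Int.le_span_pow_ordAt p (entrySpan (j.removeNth i))
    have hstable := coneChain_sub_coneChain_mem ha (hEN j)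
      (fun r hr => hc p r (E j) hr (j.removeNth i 0) (entrySpan_le_iff.1 hk 0)) hk
    refine Ideal.span_singleton_le_span_singleton.2 (pow_dvd_pow _ (heE j)) ?_
    rw [← sub_sub_sub_cancel_right _ _ (coneChain (c p) a (E j) (j.removeNth i))]
    exact sub_mem (hx _ p) hstable
  have hcenter := coboundary_coneChain_sub_mem ha
    (hc p N e ((heE 0).trans (hEN 0)) (i 0) (entrySpan_le_iff.1 hi 0)) hi
  have hsplit : coboundary x i - a i = coboundary (x - coneChain (c p) a N) i +
      (coboundary (coneChain (c p) a N) i - a i) := by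
    rw [map_sub, Pi.sub_apply]; abel
  rw [hsplit, coboundary_apply]
  exact add_mem (sum_mem fun j _ => Ideal.mul_mem_left _ _ (hface j)) hcenter

end TupleCochain

/-- **Integral congruences, general degree.**
Let `n > 0`, `I` a set of integers, and `a` a family of integers indexed by
`(n+1)`-tuples from `I`. If for every `(n+2)`-tuple the alternating sum
`∑ j, (-1)^j * a(i₀,…,î_j,…,i_{n+1})` lies in the ideal of `ℤ` generated by
`i₀,…,i_{n+1}`, then there is a family `x` indexed by `n`-tuples with
`∑ j, (-1)^j * x(i₀,…,î_j,…,iₙ) ≡ a(i₀,…,iₙ)` modulo the ideal `(i₀,…,iₙ)`. -/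
theorem integral_congruences (n : ℕ) (hn : 0 < n) (I : Set ℤ)
    (a : (Fin (n + 1) → I) → ℤ)
    (h : ∀ i : Fin (n + 2) → I,
      (∑ j : Fin (n + 2), (-1 : ℤ) ^ (j : ℕ) * a (fun k => i (j.succAbove k)))
        ∈ Ideal.span (Set.range fun k => (i k : ℤ))) :
    ∃ x : (Fin n → I) → ℤ, ∀ i : Fin (n + 1) → I,
      (∑ j : Fin (n + 1), (-1 : ℤ) ^ (j : ℕ) * x (fun k => i (j.succAbove k))) - a i
        ∈ Ideal.span (Set.range fun k => (i k : ℤ)) := by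
  obtain ⟨m, rfl⟩ : ∃ m, n = m + 1 := ⟨n - 1, by omega⟩
  by_cases h0 : (0 : ℤ) ∈ I
  · exact TupleCochain.exists_coboundary_sub_mem_of_zero_mem (a := a) h h0
  · exact TupleCochain.exists_coboundary_sub_mem_of_zero_notMem (a := a) h0 h
end

section
/- Let V = ℚ³ and let L₀, L₁, L₂, L₃ be the four lines (1-dimensional ℚ-subspaces, regarded as additive subgroups) spanned by (1,0,0), (0,1,0), (0,0,1) and (1,1,1) respectively. Then there exists a family a : Fin 4 × Fin 4 → V such that for all i, j, k the element a(i,j) + a(j,k) − a(i,k) lies in L_i + L_j + L_k, and yet there is no family x : Fin 4 → V satisfying x(j) − x(i) − a(i,j) ∈ L_i + L_j for all i, j. In particular, for a general abelian group A with a family of subgroups (A_i), the necessary cocycle condition Σ_j (−1)^j a(i₀,…,î_j,…,i_{n+1}) ∈ A_{i₀} + ⋯ + A_{i_{n+1}} is not sufficient for solvability of the congruences Σ_j (−1)^j x(i₀,…,î_j,…,iₙ) ≡ a(i₀,…,iₙ) (mod A_{i₀} + ⋯ + A_{iₙ}). -/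
/-- The four lines in `ℚ³` spanned by `(1,0,0)`, `(0,1,0)`, `(0,0,1)`, `(1,1,1)`. -/
noncomputable def fourLines : Fin 4 → Submodule ℚ (Fin 3 → ℚ) := fun i =>
  Submodule.span ℚ {![![(1:ℚ),0,0], ![0,1,0], ![0,0,1], ![1,1,1]] i}

/-!
Any three of the four lines span `ℚ³`, so for an antisymmetric `a` the cocycle condition holds
for every triple; we take `a` supported on the pair `(0, 1)`. Solvability, on the other hand, is
obstructed by linear functionals `φ i j` vanishing on `L i + L j`: if `∑ φ i j (x j - x i)` vanishes
identically in `x`, then a solution `x` forces `∑ φ i j (a i j) = 0`. Such a family exists for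
four lines in `ℚ³`, and it takes the value `-1` on our `a`.
-/

section Obstruction

variable {ι R V M : Type*} [Ring R] [AddCommGroup V] [Module R V] [AddCommGroup M] [Module R M]

theorem not_exists_forall_sub_sub_mem_sup_of_sum_ne_zero [Fintype ι]
    (L : ι → Submodule R V) (a : ι → ι → V) (φ : ι → ι → V →ₗ[R] M)
    (hφ : ∀ i j, L i ⊔ L j ≤ LinearMap.ker (φ i j))
    (hcobound : ∀ x : ι → V, ∑ i, ∑ j, φ i j (x j - x i) = 0)
    (ha : ∑ i, ∑ j, φ i j (a i j) ≠ 0) :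
    ¬ ∃ x : ι → V, ∀ i j, x j - x i - a i j ∈ L i ⊔ L j := by
  rintro ⟨x, hx⟩
  have hφx : ∀ i j, φ i j (x j - x i) = φ i j (a i j) := fun i j => by
    have := hφ i j (hx i j)
    rwa [LinearMap.mem_ker, map_sub, sub_eq_zero] at this
  exact ha (by simpa only [hφx] using hcobound x)

end Obstruction

section Antisymm

variable {ι V : Type*} [DecidableEq ι] [AddCommGroup V]

def antisymmSingle (p q : ι) (u : V) : ι → ι → V := fun i j =>
  (if i = p ∧ j = q then u else 0) - (if i = q ∧ j = p then u else 0)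

theorem antisymmSingle_self (p q : ι) (u : V) (i : ι) : antisymmSingle p q u i i = 0 := by
  simp only [antisymmSingle, and_comm, sub_self]

theorem antisymmSingle_swap (p q : ι) (u : V) (i j : ι) :
    antisymmSingle p q u j i = -antisymmSingle p q u i j := by
  simp only [antisymmSingle, and_comm, neg_sub]

theorem sum_sum_map_antisymmSingle [Fintype ι] {M F : Type*} [AddCommGroup M] [FunLike F V M]
    [AddMonoidHomClass F V M] (φ : ι → ι → F) (p q : ι) (u : V) :
    ∑ i, ∑ j, φ i j (antisymmSingle p q u i j) = φ p q u - φ q p u := by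
  simp only [antisymmSingle, map_sub, Finset.sum_sub_distrib, ite_and, apply_ite (φ _ _), map_zero,
    Finset.sum_ite_irrel, Finset.sum_ite_eq', Finset.mem_univ, ↓reduceIte, Finset.sum_const_zero]

end Antisymm

theorem add_sub_eq_zero_of_antisymm {ι V : Type*} [AddCommGroup V] {a : ι → ι → V}
    (hself : ∀ i, a i i = 0) (hswap : ∀ i j, a j i = -a i j) {i j k : ι}
    (h : i = j ∨ j = k ∨ i = k) : a i j + a j k - a i k = 0 := by
  rcases h with rfl | rfl | rfl
  · rw [hself, zero_add, sub_self]
  · rw [hself, add_zero, sub_self]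
  · rw [hswap i j, hself, add_neg_cancel, sub_zero]

theorem Submodule.span_singleton_sup_sup_eq_top {R M : Type*} [Semiring R] [AddCommMonoid M]
    [Module R M] {u w z : M} (h : ∀ v, ∃ a b c : R, a • u + b • w + c • z = v) :
    R ∙ u ⊔ R ∙ w ⊔ R ∙ z = ⊤ := by
  rw [sup_assoc, ← span_insert, ← span_insert, eq_top_iff']
  exact fun v => mem_span_triple.2 (h v)

theorem fourLines_sup_sup_eq_top {i j k : Fin 4} (hij : i ≠ j) (hik : i ≠ k) (hjk : j ≠ k) :
    fourLines i ⊔ fourLines j ⊔ fourLines k = ⊤ := by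
  have h012 : fourLines 0 ⊔ fourLines 1 ⊔ fourLines 2 = ⊤ :=
    Submodule.span_singleton_sup_sup_eq_top fun v =>
      ⟨v 0, v 1, v 2, by ext m; fin_cases m <;> simp⟩
  have h013 : fourLines 0 ⊔ fourLines 1 ⊔ fourLines 3 = ⊤ :=
    Submodule.span_singleton_sup_sup_eq_top fun v =>
      ⟨v 0 - v 2, v 1 - v 2, v 2, by ext m; fin_cases m <;> simp⟩
  have h023 : fourLines 0 ⊔ fourLines 2 ⊔ fourLines 3 = ⊤ :=
    Submodule.span_singleton_sup_sup_eq_top fun v =>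
      ⟨v 0 - v 1, v 2 - v 1, v 1, by ext m; fin_cases m <;> simp⟩
  have h123 : fourLines 1 ⊔ fourLines 2 ⊔ fourLines 3 = ⊤ :=
    Submodule.span_singleton_sup_sup_eq_top fun v =>
      ⟨v 1 - v 0, v 2 - v 0, v 0, by ext m; fin_cases m <;> simp⟩
  fin_cases i <;> fin_cases j <;> fin_cases k <;>
    first
      | exact absurd rfl hij
      | exact absurd rfl hik
      | exact absurd rfl hjk
      | (rw [← h012]; ac_rfl)
      | (rw [← h013]; ac_rfl)
      | (rw [← h023]; ac_rfl)
      | (rw [← h123]; ac_rfl)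

/-- Entry `(i, j)` is `± vᵢ × vⱼ` for the spanning vectors `vᵢ` of the lines, so it annihilates
`L i + L j`; the signs make the family a cycle, i.e. orthogonal to every coboundary `x j - x i`. -/
def annihilatingCycle : Fin 4 → Fin 4 → Fin 3 → ℚ :=
  ![![0, ![0, 0, -1], ![0, 1, 0], ![0, -1, 1]],
    ![0, 0, ![-1, 0, 0], ![1, 0, -1]],
    ![0, 0, 0, ![-1, 1, 0]],
    0]

theorem fourLines_sup_le_ker_annihilatingCycle (i j : Fin 4) :
    fourLines i ⊔ fourLines j ≤ LinearMap.ker (dotProductBilin ℚ ℚ (annihilatingCycle i j)) := by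
  simp only [fourLines, sup_le_iff, Submodule.span_singleton_le_iff_mem, LinearMap.mem_ker,
    dotProductBilin_apply_apply]
  fin_cases i <;> fin_cases j <;> simp [annihilatingCycle, dotProduct, Fin.sum_univ_three]

theorem sum_sum_annihilatingCycle_dotProduct_sub (x : Fin 4 → Fin 3 → ℚ) :
    ∑ i, ∑ j, annihilatingCycle i j ⬝ᵥ (x j - x i) = 0 := by
  simp only [dotProduct, Fin.sum_univ_four, Fin.sum_univ_three, annihilatingCycle, Pi.sub_apply,
    Pi.zero_apply, Matrix.cons_val]
  ring

/-- **The cocycle condition is not sufficient in general.**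
With `V = ℚ³` and the four lines `L₀, L₁, L₂, L₃` in general position above, there
is a family `a : Fin 4 × Fin 4 → V` with `a i j + a j k - a i k ∈ L i + L j + L k`
for all `i, j, k`, yet no family `x : Fin 4 → V` satisfies
`x j - x i - a i j ∈ L i + L j` for all `i, j`. -/
theorem cocycle_condition_not_sufficient :
    ∃ a : Fin 4 → Fin 4 → (Fin 3 → ℚ),
      (∀ i j k : Fin 4,
        a i j + a j k - a i k ∈ fourLines i ⊔ fourLines j ⊔ fourLines k) ∧
      ¬ ∃ x : Fin 4 → (Fin 3 → ℚ), ∀ i j : Fin 4,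
        x j - x i - a i j ∈ fourLines i ⊔ fourLines j := by
  refine ⟨antisymmSingle 0 1 ![0, 0, 1], fun i j k => ?_, ?_⟩
  · by_cases h : i ≠ j ∧ i ≠ k ∧ j ≠ k
    · rw [fourLines_sup_sup_eq_top h.1 h.2.1 h.2.2]
      exact Submodule.mem_top
    · rw [add_sub_eq_zero_of_antisymm (antisymmSingle_self 0 1 _) (antisymmSingle_swap 0 1 _)
        (by tauto)]
      exact zero_mem _
  · let φ i j := dotProductBilin ℚ ℚ (annihilatingCycle i j)
    refine not_exists_forall_sub_sub_mem_sup_of_sum_ne_zero fourLines _ φ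
      fourLines_sup_le_ker_annihilatingCycle sum_sum_annihilatingCycle_dotProduct_sub ?_
    rw [sum_sum_map_antisymmSingle]
    norm_num [φ, annihilatingCycle]
end

section
/- Let V = ℚ³ and let L₀, L₁, L₂, L₃ be the 1-dimensional ℚ-subspaces spanned by (1,0,0), (0,1,0), (0,0,1) and (1,1,1) respectively. Then the ℚ-linear map d from the product ∏_{i ∈ Fin 4} V/L_i to the product ∏_{i < j} V/(L_i + L_j), sending a family (x_i mod L_i)_{i} to the family (x_j − x_i mod (L_i + L_j))_{i<j}, is not surjective. -/
/-- The coboundary map `d : ∏ i, V/Lᵢ → ∏_{i<j} V/(Lᵢ + Lⱼ)` sending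
`(xᵢ mod Lᵢ)ᵢ` to `(xⱼ - xᵢ mod (Lᵢ + Lⱼ))_{i<j}`. -/
noncomputable def coboundaryMap :
    ((i : Fin 4) → (Fin 3 → ℚ) ⧸ fourLines i) →ₗ[ℚ]
      ((q : {q : Fin 4 × Fin 4 // q.1 < q.2}) →
        (Fin 3 → ℚ) ⧸ (fourLines q.1.1 ⊔ fourLines q.1.2)) :=
  LinearMap.pi fun q =>
    (Submodule.mapQ (fourLines q.1.2) (fourLines q.1.1 ⊔ fourLines q.1.2)
        LinearMap.id (by simp)).comp
      (LinearMap.proj q.1.2)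
    - (Submodule.mapQ (fourLines q.1.1) (fourLines q.1.1 ⊔ fourLines q.1.2)
        LinearMap.id (by simp)).comp
      (LinearMap.proj q.1.1)

open Module Submodule

section

variable {K V M N : Type*} [DivisionRing K] [AddCommGroup V] [Module K V]
  [AddCommGroup M] [Module K M] [AddCommGroup N] [Module K N]

theorem LinearMap.not_surjective_of_finrank_lt [FiniteDimensional K M] {f : M →ₗ[K] N}
    {g : V →ₗ[K] M} (hg : Function.Injective g) (hfg : f ∘ₗ g = 0)
    (hlt : finrank K M < finrank K V + finrank K N) : ¬ Function.Surjective f := by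
  intro hf
  have hker : finrank K V ≤ finrank K (LinearMap.ker f) := by
    rw [← LinearMap.finrank_range_of_inj hg]
    exact finrank_mono (LinearMap.range_le_ker_iff.mpr hfg)
  have hrank := f.finrank_range_add_finrank_ker
  rw [LinearMap.range_eq_top.mpr hf, finrank_top] at hrank
  omega

theorem injective_pi_mkQ_of_iInf_eq_bot {ι : Type*} {L : ι → Submodule K V}
    (hL : ⨅ i, L i = ⊥) : Function.Injective (LinearMap.pi fun i => (L i).mkQ) := by
  rw [← LinearMap.ker_eq_bot, LinearMap.ker_pi]
  simpa only [ker_mkQ] using hL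

variable [FiniteDimensional K V]

theorem finrank_quotient_span_singleton_add_one {v : V} (hv : v ≠ 0) :
    finrank K (V ⧸ K ∙ v) + 1 = finrank K V := by
  rw [← finrank_span_singleton (K := K) hv, finrank_quotient_add_finrank]

theorem finrank_le_finrank_quotient_span_sup_span_add_two (u v : V) :
    finrank K V ≤ finrank K (V ⧸ (K ∙ u ⊔ K ∙ v)) + 2 := by
  have hline (w : V) : finrank K (K ∙ w) ≤ 1 := by
    simpa using finrank_span_le_card (R := K) ({w} : Set V)
  have hplane := finrank_add_le_finrank_add_finrank (K ∙ u) (K ∙ v)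
  have := finrank_quotient_add_finrank (K ∙ u ⊔ K ∙ v)
  have := hline u
  have := hline v
  omega

end

def fourLinesGenerator : Fin 4 → Fin 3 → ℚ :=
  ![![(1:ℚ),0,0], ![0,1,0], ![0,0,1], ![1,1,1]]

theorem fourLines_eq_span (i : Fin 4) : fourLines i = ℚ ∙ fourLinesGenerator i := rfl

theorem fourLinesGenerator_ne_zero (i : Fin 4) : fourLinesGenerator i ≠ 0 := by
  revert i
  decide

theorem finrank_quotient_fourLines (i : Fin 4) : finrank ℚ ((Fin 3 → ℚ) ⧸ fourLines i) = 2 := by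
  have := finrank_quotient_span_singleton_add_one (K := ℚ) (fourLinesGenerator_ne_zero i)
  rw [finrank_fin_fun, ← fourLines_eq_span] at this
  omega

theorem one_le_finrank_quotient_fourLines_sup (i j : Fin 4) :
    1 ≤ finrank ℚ ((Fin 3 → ℚ) ⧸ (fourLines i ⊔ fourLines j)) := by
  have := finrank_le_finrank_quotient_span_sup_span_add_two (K := ℚ)
    (fourLinesGenerator i) (fourLinesGenerator j)
  rw [finrank_fin_fun, ← fourLines_eq_span, ← fourLines_eq_span] at this
  omega

theorem iInf_fourLines : ⨅ i, fourLines i = ⊥ := by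
  refine eq_bot_iff.mpr fun x hx => ?_
  have h0 := (mem_iInf _).mp hx 0
  have h1 := (mem_iInf _).mp hx 1
  simp only [fourLines_eq_span, mem_span_singleton] at h0 h1
  obtain ⟨a, rfl⟩ := h0
  obtain ⟨b, hb⟩ := h1
  have ha : a = 0 := by simpa [fourLinesGenerator] using (congrFun hb 0).symm
  simp [ha]

theorem coboundaryMap_comp_pi_mkQ :
    coboundaryMap ∘ₗ LinearMap.pi (fun i => (fourLines i).mkQ) = 0 := by
  ext x q
  simp [coboundaryMap]

/-- **The coboundary map is not surjective** for the four lines in general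
position in `ℚ³`. -/
theorem coboundaryMap_not_surjective : ¬ Function.Surjective coboundaryMap := by
  refine LinearMap.not_surjective_of_finrank_lt (injective_pi_mkQ_of_iInf_eq_bot iInf_fourLines)
    coboundaryMap_comp_pi_mkQ ?_
  have hdomain : finrank ℚ ((i : Fin 4) → (Fin 3 → ℚ) ⧸ fourLines i) = 8 := by
    simp [finrank_pi_fintype, finrank_quotient_fourLines]
  have hcodomain : 6 ≤ finrank ℚ ((q : {q : Fin 4 × Fin 4 // q.1 < q.2}) →
      (Fin 3 → ℚ) ⧸ (fourLines q.1.1 ⊔ fourLines q.1.2)) := by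
    rw [finrank_pi_fintype]
    calc 6 = ∑ _q : {q : Fin 4 × Fin 4 // q.1 < q.2}, 1 := by simp; rfl
      _ ≤ _ := Finset.sum_le_sum fun q _ => one_le_finrank_quotient_fourLines_sup q.1.1 q.1.2
  rw [hdomain, finrank_fin_fun]
  omega
end

section
/- Let A be an abelian group, I a finite set, and (A_i)_{i∈I} a family of subgroups of A. Assume that the sublattice of subgroups of A generated by the A_i under join (sum of subgroups) and meet (intersection) is distributive, i.e. B ⊓ (C ⊔ D) = (B ⊓ C) ⊔ (B ⊓ D) for all B, C, D in the lattice closure of {A_i : i ∈ I}. Let n be a positive integer and a a family of elements of A indexed by (n+1)-tuples (i₀,…,iₙ) ∈ I^{n+1}. If Σ_{j=0}^{n+1} (−1)^j a(i₀,…,î_j,…,i_{n+1}) ∈ A_{i₀} + ⋯ + A_{i_{n+1}} for all i₀,…,i_{n+1} ∈ I, then there exists a family x of elements of A indexed by n-tuples such that Σ_{j=0}^{n} (−1)^j x(i₀,…,î_j,…,iₙ) − a(i₀,…,iₙ) ∈ A_{i₀} + ⋯ + A_{iₙ} for all i₀,…,iₙ ∈ I. -/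
/-!
Induction on the finite set of indices. Adjoin an index `t` to `S` and put `c(i) = (δa)(t, i)`.
On tuples from `insert t S` the cocycle condition puts `c(i)` in `B t + ∑ₖ B (i k)`; split it
as `u(i) + s(i)` with `u(i) ∈ B t`. Since `δc = δa - δδa(t, ·) = δa`, the coboundary `δu` lies
in `B t ∩ ∑ₖ B (i k)`, which by distributivity is `∑ₖ (B t ∩ B (i k))`. So `u` is a cocycle for
the family `B t ∩ B j` on `S`, which again generates a distributive lattice, and induction gives
`z` with values in `B t` and `δz ≡ u`. Then `x = a(t, ·) + z` works: on tuples avoiding `t`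
because `δx - a = δz - c`, and on tuples through `t` because `B t` is then part of the modulus.
-/

/-- The lattice closure of a family of subgroups: the smallest family containing
the `A i` and closed under binary join (sum) and meet (intersection). -/
inductive IsInLatticeClosure {A : Type*} [AddCommGroup A] {I : Type*}
    (Ai : I → AddSubgroup A) : AddSubgroup A → Prop
  | base (i : I) : IsInLatticeClosure Ai (Ai i)
  | sup {B C : AddSubgroup A} : IsInLatticeClosure Ai B → IsInLatticeClosure Ai C →
      IsInLatticeClosure Ai (B ⊔ C)
  | inf {B C : AddSubgroup A} : IsInLatticeClosure Ai B → IsInLatticeClosure Ai C →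
      IsInLatticeClosure Ai (B ⊓ C)

section

variable {A I : Type*} [AddCommGroup A]

theorem iSup_fin_succ {α : Type*} [CompleteLattice α] {m : ℕ} (f : Fin (m + 1) → α) :
    ⨆ k, f k = f 0 ⊔ ⨆ k : Fin m, f k.succ := by
  simp [← Finset.sup_univ_eq_iSup, Fin.univ_succ, Function.comp_def]

theorem iSup_fin_cons {α : Type*} [CompleteLattice α] (B : I → α) {p : ℕ} (t : I)
    (i : Fin p → I) : ⨆ k, B ((Fin.cons t i : Fin (p + 1) → I) k) = B t ⊔ ⨆ k, B (i k) := by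
  simp only [iSup_fin_succ, Fin.cons_zero, Fin.cons_succ]

namespace IsInLatticeClosure

variable {B : I → AddSubgroup A}

theorem trans {J : Type*} {B' : J → AddSubgroup A} {X : AddSubgroup A}
    (hX : IsInLatticeClosure B' X) (hB' : ∀ j, IsInLatticeClosure B (B' j)) :
    IsInLatticeClosure B X := by
  induction hX with
  | base j => exact hB' j
  | sup _ _ ihY ihZ => exact .sup ihY ihZ
  | inf _ _ ihY ihZ => exact .inf ihY ihZ

theorem iSup_fin {m : ℕ} {C : Fin (m + 1) → AddSubgroup A}
    (hC : ∀ k, IsInLatticeClosure B (C k)) : IsInLatticeClosure B (⨆ k, C k) := by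
  induction m with
  | zero => simpa [iSup_fin_succ] using hC 0
  | succ m ih => rw [iSup_fin_succ]; exact .sup (hC 0) (ih fun k => hC k.succ)

end IsInLatticeClosure

def IsDistribOnLatticeClosure (B : I → AddSubgroup A) : Prop :=
  ∀ X Y Z : AddSubgroup A, IsInLatticeClosure B X → IsInLatticeClosure B Y →
    IsInLatticeClosure B Z → X ⊓ (Y ⊔ Z) = (X ⊓ Y) ⊔ (X ⊓ Z)

namespace IsDistribOnLatticeClosure

variable {B : I → AddSubgroup A}

theorem of_isInLatticeClosure {J : Type*} {B' : J → AddSubgroup A}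
    (hB : IsDistribOnLatticeClosure B) (hB' : ∀ j, IsInLatticeClosure B (B' j)) :
    IsDistribOnLatticeClosure B' :=
  fun X Y Z hX hY hZ => hB X Y Z (hX.trans hB') (hY.trans hB') (hZ.trans hB')

theorem inf_iSup_fin {G : AddSubgroup A} (hB : IsDistribOnLatticeClosure B)
    (hG : IsInLatticeClosure B G) {m : ℕ} {C : Fin (m + 1) → AddSubgroup A}
    (hC : ∀ k, IsInLatticeClosure B (C k)) : G ⊓ ⨆ k, C k = ⨆ k, G ⊓ C k := by
  induction m with
  | zero => simp
  | succ m ih =>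
    rw [iSup_fin_succ, iSup_fin_succ (fun k => G ⊓ C k),
      hB G _ _ hG (hC 0) (.iSup_fin fun k => hC k.succ), ih fun k => hC k.succ]

end IsDistribOnLatticeClosure

def coboundary (p : ℕ) : ((Fin p → I) → A) →+ ((Fin (p + 1) → I) → A) :=
  AddMonoidHom.mk'
    (fun f i => ∑ j : Fin (p + 1), (-1 : ℤ) ^ (j : ℕ) • f (fun k => i (j.succAbove k)))
    fun f g => by ext i; simp [smul_add, Finset.sum_add_distrib]

section

variable {p : ℕ}

theorem coboundary_apply (f : (Fin p → I) → A) (i : Fin (p + 1) → I) :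
    coboundary p f i =
      ∑ j : Fin (p + 1), (-1 : ℤ) ^ (j : ℕ) • f (fun k => i (j.succAbove k)) :=
  rfl

theorem coboundary_comp_cons (t : I) (f : (Fin (p + 1) → I) → A) (i : Fin (p + 1) → I) :
    coboundary p (fun j => f (Fin.cons t j)) i = f i - coboundary (p + 1) f (Fin.cons t i) := by
  have hface : ∀ j : Fin (p + 1),
      (fun k => (Fin.cons t i : Fin (p + 2) → I) (j.succ.succAbove k))
        = Fin.cons t fun k => i (j.succAbove k) := by
    intro j; funext k
    induction k using Fin.cases <;> simp
  rw [coboundary_apply, coboundary_apply, Fin.sum_univ_succ (n := p + 1)]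
  simp only [hface, Fin.zero_succAbove, Fin.cons_succ, Fin.val_succ, Fin.val_zero, pow_zero,
    one_smul, pow_succ, mul_neg_one, neg_smul, Finset.sum_neg_distrib]
  abel

theorem coboundary_coboundary_apply (f : (Fin p → I) → A) (i : Fin (p + 2) → I) :
    coboundary (p + 1) (coboundary p f) i = 0 := by
  induction p with
  | zero => simp [coboundary_apply, Fin.sum_univ_two]
  | succ p ih =>
    -- splitting off the first index reduces `δδ` on `p + 1`-cochains to `δδ` on `p`-cochains
    refine Fin.consCases (fun t i => ?_) i
    have hcons : (fun j => coboundary (p + 1) f (Fin.cons t j))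
        = f - coboundary p (fun j => f (Fin.cons t j)) := by
      funext j; rw [Pi.sub_apply, coboundary_comp_cons]; abel
    have h := coboundary_comp_cons t (coboundary (p + 1) f) i
    rw [hcons, map_sub, Pi.sub_apply, ih, sub_zero] at h
    exact sub_eq_self.mp h.symm

theorem coboundary_mem {H : AddSubgroup A} {f : (Fin p → I) → A} {i : Fin (p + 1) → I}
    (h : ∀ j : Fin (p + 1), f (fun k => i (j.succAbove k)) ∈ H) : coboundary p f i ∈ H := by
  rw [coboundary_apply]
  exact sum_mem fun j _ => zsmul_mem (h j) _

end

variable (A) in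
/-- The bound `G` on the values is what lets the induction step run inside the subgroup `B t`. -/
def CocyclesAreCoboundariesOn (n : ℕ) (S : Set I) : Prop :=
  ∀ (B : I → AddSubgroup A) (G : AddSubgroup A) (a : (Fin (n + 1) → I) → A),
    IsDistribOnLatticeClosure B → (∀ j, B j ≤ G) → (∀ i, a i ∈ G) →
    (∀ i : Fin (n + 2) → I, Set.range i ⊆ S → coboundary (n + 1) a i ∈ ⨆ k, B (i k)) →
    ∃ x : (Fin n → I) → A, (∀ i, x i ∈ G) ∧
      ∀ i : Fin (n + 1) → I, Set.range i ⊆ S → coboundary n x i - a i ∈ ⨆ k, B (i k)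

theorem cocyclesAreCoboundariesOn_empty (n : ℕ) : CocyclesAreCoboundariesOn A n (∅ : Set I) :=
  fun _ G _ _ _ _ _ => ⟨0, fun _ => zero_mem G, fun _ hi => (hi ⟨0, rfl⟩).elim⟩

theorem exists_inf_cocycle_of_cons {n : ℕ} {B : I → AddSubgroup A}
    (hB : IsDistribOnLatticeClosure B) {S : Set I} {t : I} {a : (Fin (n + 1) → I) → A}
    (ha : ∀ i : Fin (n + 2) → I, Set.range i ⊆ insert t S →
      coboundary (n + 1) a i ∈ ⨆ k, B (i k)) :
    ∃ u : (Fin (n + 1) → I) → A, (∀ i, u i ∈ B t) ∧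
      (∀ i, Set.range i ⊆ insert t S →
        coboundary (n + 1) a (Fin.cons t i) - u i ∈ ⨆ k, B (i k)) ∧
      ∀ i : Fin (n + 2) → I, Set.range i ⊆ S →
        coboundary (n + 1) u i ∈ ⨆ k, B t ⊓ B (i k) := by
  set c : (Fin (n + 1) → I) → A := fun i => coboundary (n + 1) a (Fin.cons t i)
  have hsplit :
      ∀ i, ∃ u ∈ B t, Set.range i ⊆ insert t S → c i - u ∈ ⨆ k, B (i k) := by
    intro i
    by_cases hi : Set.range i ⊆ insert t S
    · have hci := ha (Fin.cons t i) <| by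
        rw [Fin.range_cons]; exact Set.insert_subset (Set.mem_insert t S) hi
      rw [iSup_fin_cons] at hci
      obtain ⟨u, hu, s, hs, hus⟩ := AddSubgroup.mem_sup.mp hci
      exact ⟨u, hu, fun _ => by rwa [show c i = u + s from hus.symm, add_sub_cancel_left]⟩
    · exact ⟨0, zero_mem _, fun h => absurd h hi⟩
  choose u hu hcu using hsplit
  refine ⟨u, hu, hcu, fun i hi => ?_⟩
  have hi' := hi.trans (Set.subset_insert t S)
  rw [← hB.inf_iSup_fin (.base t) fun k => .base (i k)]
  refine AddSubgroup.mem_inf.2 ⟨coboundary_mem fun j => hu _, ?_⟩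
  have hdc : coboundary (n + 1) c i = coboundary (n + 1) a i := by
    rw [coboundary_comp_cons, coboundary_coboundary_apply, sub_zero]
  have hdu : coboundary (n + 1) u i
      = coboundary (n + 1) c i - coboundary (n + 1) (c - u) i := by
    rw [map_sub, Pi.sub_apply, sub_sub_cancel]
  rw [hdu, hdc]
  refine sub_mem (ha i hi') (coboundary_mem fun j => ?_)
  exact iSup_comp_le (fun k => B (i k)) j.succAbove
    (hcu _ ((Set.range_comp_subset_range _ _).trans hi'))

theorem cocyclesAreCoboundariesOn_insert {n : ℕ} {S : Set I}
    (h : CocyclesAreCoboundariesOn A n S) (t : I) :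
    CocyclesAreCoboundariesOn A n (insert t S) := by
  intro B G a hB hBG haG ha
  obtain ⟨u, hu, hcu, hdu⟩ := exists_inf_cocycle_of_cons hB ha
  obtain ⟨z, hzt, hz⟩ := h (fun j => B t ⊓ B j) (B t) u
    (hB.of_isInLatticeClosure fun j => .inf (.base t) (.base j)) (fun _ => inf_le_left) hu hdu
  refine ⟨fun j => a (Fin.cons t j) + z j, fun j => add_mem (haG _) (hBG t (hzt j)),
    fun i hi => ?_⟩
  have hx : coboundary n (fun j => a (Fin.cons t j) + z j) i - a i
      = coboundary n z i - coboundary (n + 1) a (Fin.cons t i) := by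
    change coboundary n ((fun j => a (Fin.cons t j)) + z) i - a i = _
    rw [map_add, Pi.add_apply, coboundary_comp_cons]
    abel
  rw [hx]
  by_cases ht : t ∈ Set.range i
  · obtain ⟨k, hk⟩ := ht
    have hBt : B t ≤ ⨆ k, B (i k) := hk ▸ le_iSup (fun k => B (i k)) k
    refine sub_mem (coboundary_mem fun j => hBt (hzt _)) ?_
    simpa using add_mem (hcu i hi) (hBt (hu i))
  · have hiS : Set.range i ⊆ S := fun x hx =>
      (hi hx).resolve_left fun hxt => ht (hxt ▸ hx)
    have hle : ⨆ k, B t ⊓ B (i k) ≤ ⨆ k, B (i k) := iSup_mono fun _ => inf_le_right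
    rw [← sub_sub_sub_cancel_right _ _ (u i)]
    exact sub_mem (hle (hz i hiS)) (hcu i hi)

theorem Set.Finite.cocyclesAreCoboundariesOn {S : Set I} (hS : S.Finite) (n : ℕ) :
    CocyclesAreCoboundariesOn A n S := by
  induction S, hS using Set.Finite.induction_on with
  | empty => exact cocyclesAreCoboundariesOn_empty n
  | insert _ _ h => exact cocyclesAreCoboundariesOn_insert h _

end

theorem cocycle_condition_sufficient_of_distributive_general
    {A : Type*} [AddCommGroup A] {I : Type*} [Finite I]
    (Ai : I → AddSubgroup A)
    (hdistrib : ∀ B C D : AddSubgroup A, IsInLatticeClosure Ai B →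
      IsInLatticeClosure Ai C → IsInLatticeClosure Ai D →
      B ⊓ (C ⊔ D) = (B ⊓ C) ⊔ (B ⊓ D))
    (n : ℕ) (a : (Fin (n + 1) → I) → A)
    (ha : ∀ i : Fin (n + 2) → I,
      (∑ j : Fin (n + 2), (-1 : ℤ) ^ (j : ℕ) • a (fun k => i (j.succAbove k)))
        ∈ ⨆ k, Ai (i k)) :
    ∃ x : (Fin n → I) → A, ∀ i : Fin (n + 1) → I,
      (∑ j : Fin (n + 1), (-1 : ℤ) ^ (j : ℕ) • x (fun k => i (j.succAbove k))) - a i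
        ∈ ⨆ k, Ai (i k) := by
  obtain ⟨x, -, hx⟩ := Set.finite_univ.cocyclesAreCoboundariesOn n Ai ⊤ a hdistrib
    (fun _ => le_top) (fun _ => AddSubgroup.mem_top _) fun i _ => ha i
  exact ⟨x, fun i => hx i (Set.subset_univ _)⟩

/-- **Sufficiency of the cocycle condition in the distributive case.**
If `I` is finite and the subgroups `A i` generate a distributive lattice, then
every `n`-cocycle is a coboundary: the congruences
`∑ j, (-1)^j x(i₀,…,î_j,…,iₙ) ≡ a(i₀,…,iₙ) (mod A_{i₀} + ⋯ + A_{iₙ})` are solvable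
provided `∑ j, (-1)^j a(i₀,…,î_j,…,i_{n+1}) ∈ A_{i₀} + ⋯ + A_{i_{n+1}}` always holds. -/
theorem cocycle_condition_sufficient_of_distributive
    {A : Type*} [AddCommGroup A] {I : Type*} [Finite I]
    (Ai : I → AddSubgroup A)
    (hdistrib : ∀ B C D : AddSubgroup A, IsInLatticeClosure Ai B →
      IsInLatticeClosure Ai C → IsInLatticeClosure Ai D →
      B ⊓ (C ⊔ D) = (B ⊓ C) ⊔ (B ⊓ D))
    (n : ℕ) (hn : 0 < n) (a : (Fin (n + 1) → I) → A)
    (ha : ∀ i : Fin (n + 2) → I,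
      (∑ j : Fin (n + 2), (-1 : ℤ) ^ (j : ℕ) • a (fun k => i (j.succAbove k)))
        ∈ ⨆ k, Ai (i k)) :
    ∃ x : (Fin n → I) → A, ∀ i : Fin (n + 1) → I,
      (∑ j : Fin (n + 1), (-1 : ℤ) ^ (j : ℕ) • x (fun k => i (j.succAbove k))) - a i
        ∈ ⨆ k, Ai (i k) :=
  cocycle_condition_sufficient_of_distributive_general Ai hdistrib n a ha
end

section
/- Let p be a prime number, let R be the localization of ℤ at the prime ideal (p) (so R = ℤ_(p)), and let J : ℕ → Ideal R be a decreasing sequence of ideals (m ≤ k implies J k ≤ J m). Let n be a positive integer and let a assign to each strictly increasing (n+1)-tuple i₀ < ⋯ < iₙ of natural numbers an element a(i₀,…,iₙ) ∈ R. Suppose that for every strictly increasing (n+2)-tuple i₀ < ⋯ < i_{n+1} the alternating sum Σ_{j=0}^{n+1} (−1)^j a(i₀,…,î_j,…,i_{n+1}) lies in J(i₀). Then there exists a family x assigning to each strictly increasing n-tuple of natural numbers an element of R such that for every strictly increasing (n+1)-tuple i₀ < ⋯ < iₙ the difference Σ_{j=0}^{n} (−1)^j x(i₀,…,î_j,…,iₙ)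 − a(i₀,…,iₙ) lies in J(i₀). -/
/-!
Take for `x` the integral of `a` along the last coordinate,
`x(d, m) = (-1)^(n-1) ∑_{max d < k < m} a(d, k, k+1)`.
As `n ≥ 1`, this only ever moves coordinates after the first one, so every tuple involved
starts with the same `i₀`. At `(b, m)` the defect `δx - a` vanishes for `m = max b + 1`, and
passing from `m` to `m + 1` changes it by `±δa(b, m, m+1) ∈ J i₀`.
-/

/-- The multiplicative set of integers not divisible by the prime `p`, i.e. the
complement of the prime ideal `(p)` of `ℤ`. -/
def primeComplZ (p : ℕ) (hp : p.Prime) : Submonoid ℤ where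
  carrier := {x : ℤ | ¬ (p : ℤ) ∣ x}
  one_mem' := by
    intro h
    rw [show (1 : ℤ) = ((1 : ℕ) : ℤ) by norm_num, Int.natCast_dvd_natCast,
      Nat.dvd_one] at h
    exact hp.one_lt.ne' h
  mul_mem' := by
    intro a b ha hb h
    rcases (Nat.prime_iff_prime_int.mp hp).2.2 a b h with h' | h'
    · exact ha h'
    · exact hb h'

namespace Fin

variable {α : Type*} {n : ℕ}

theorem snoc_comp_castSucc_succAbove (g : Fin (n + 1) → α) (m : α) (j : Fin (n + 1)) :
    (fun k => (snoc g m : Fin (n + 2) → α) ((castSucc j).succAbove k)) =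
      snoc (fun k => g (j.succAbove k)) m := by
  funext k
  induction k using lastCases with
  | last => simp [succAbove_of_le_castSucc _ _ (castSucc_le_castSucc_iff.mpr j.le_last)]
  | cast k => rw [castSucc_succAbove_castSucc, snoc_castSucc, snoc_castSucc]

theorem strictMono_snoc [Preorder α] {f : Fin (n + 1) → α} (hf : StrictMono f) {x : α}
    (hx : f (last n) < x) :
    StrictMono (snoc f x : Fin (n + 2) → α) := by
  simpa only [insertNth_last'] using strictMono_insertNth_last hf x hx

end Fin

theorem neg_one_pow_mul_neg_one_pow (n : ℕ) : (-1 : ℤ) ^ n * (-1) ^ n = 1 := by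
  rw [← mul_pow, neg_one_mul, neg_neg, one_pow]

open Finset

namespace AlternatingCochain

variable {M : Type*} [AddCommGroup M]

section

variable {α : Type*} {n : ℕ}

def coboundary (f : (Fin n → α) → M) (i : Fin (n + 1) → α) : M :=
  ∑ j : Fin (n + 1), (-1 : ℤ) ^ (j : ℕ) • f (fun k => i (j.succAbove k))

theorem coboundary_snoc (f : (Fin (n + 1) → α) → M) (g : Fin (n + 1) → α) (m : α) :
    coboundary f (Fin.snoc g m) =
      coboundary (fun c => f (Fin.snoc c m)) g + (-1 : ℤ) ^ (n + 1) • f g := by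
  simp only [coboundary, Fin.sum_univ_castSucc, Fin.val_castSucc, Fin.val_last,
    Fin.snoc_comp_castSucc_succAbove, Fin.succAbove_last_apply, Fin.snoc_castSucc]

theorem coboundary_congr {f g : (Fin n → α) → M} {i : Fin (n + 1) → α}
    (h : ∀ j : Fin (n + 1), f (fun k => i (j.succAbove k)) = g (fun k => i (j.succAbove k))) :
    coboundary f i = coboundary g i :=
  sum_congr rfl fun j _ => by rw [h]

theorem coboundary_add (f g : (Fin n → α) → M) (i : Fin (n + 1) → α) :
    coboundary (f + g) i = coboundary f i + coboundary g i := by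
  simp only [coboundary, Pi.add_apply, smul_add, sum_add_distrib]

theorem coboundary_zsmul (c : ℤ) (f : (Fin n → α) → M) (i : Fin (n + 1) → α) :
    coboundary (c • f) i = c • coboundary f i := by
  simp only [coboundary, Pi.smul_apply, smul_sum, smul_comm c]

end

variable {N : ℕ}

-- `univ.sup (d · + 1)` is `max d + 1`, and `0` when `d` is the empty tuple.
def cone (a : (Fin (N + 2) → ℕ) → M) (e : Fin (N + 1) → ℕ) : M :=
  (-1 : ℤ) ^ N • ∑ k ∈ Ico (univ.sup fun t => Fin.init e t + 1) (e (Fin.last N)),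
    a (Fin.snoc (Fin.snoc (Fin.init e) k) (k + 1))

theorem cone_snoc (a : (Fin (N + 2) → ℕ) → M) (d : Fin N → ℕ) (m : ℕ) :
    cone a (Fin.snoc d m) = (-1 : ℤ) ^ N •
      ∑ k ∈ Ico (univ.sup fun t => d t + 1) m, a (Fin.snoc (Fin.snoc d k) (k + 1)) := by
  rw [cone, Fin.init_snoc, Fin.snoc_last]

theorem cone_snoc_succ (a : (Fin (N + 2) → ℕ) → M) {d : Fin N → ℕ} {m : ℕ}
    (hd : ∀ t, d t < m) :
    cone a (Fin.snoc d (m + 1)) =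
      cone a (Fin.snoc d m) + (-1 : ℤ) ^ N • a (Fin.snoc (Fin.snoc d m) (m + 1)) := by
  have hlo : (univ.sup fun t => d t + 1) ≤ m := Finset.sup_le fun t _ => hd t
  rw [cone_snoc, cone_snoc, sum_Ico_succ_top hlo, smul_add]

theorem cone_snoc_eq_zero (a : (Fin (N + 2) → ℕ) → M) {d : Fin N → ℕ} {m : ℕ}
    {t : Fin N} (ht : m ≤ d t + 1) : cone a (Fin.snoc d m) = 0 := by
  have hlo : m ≤ univ.sup fun t => d t + 1 :=
    ht.trans (le_sup (f := fun t => d t + 1) (mem_univ t))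
  rw [cone_snoc, Ico_eq_empty_of_le hlo, sum_empty, smul_zero]

theorem coboundary_cone_sub_snoc_succ (a : (Fin (N + 2) → ℕ) → M) {b : Fin (N + 1) → ℕ}
    {m : ℕ} (hb : ∀ t, b t < m) :
    coboundary (cone a) (Fin.snoc b (m + 1)) - a (Fin.snoc b (m + 1)) =
      coboundary (cone a) (Fin.snoc b m) - a (Fin.snoc b m) +
        (-1 : ℤ) ^ N • coboundary a (Fin.snoc (Fin.snoc b m) (m + 1)) := by
  have hfaces : coboundary (fun c => cone a (Fin.snoc c (m + 1))) b =
      coboundary ((fun c => cone a (Fin.snoc c m)) +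
        (-1 : ℤ) ^ N • fun c => a (Fin.snoc (Fin.snoc c m) (m + 1))) b :=
    coboundary_congr fun j => cone_snoc_succ a fun t => hb _
  rw [coboundary_snoc, hfaces, coboundary_add, coboundary_zsmul, coboundary_snoc,
    coboundary_snoc, coboundary_snoc]
  linear_combination (norm := module)
    (neg_one_pow_mul_neg_one_pow N) • (a (Fin.snoc b (m + 1)) - a (Fin.snoc b m))

theorem coboundary_cone_snoc_last_succ (a : (Fin (N + 2) → ℕ) → M) {b : Fin (N + 1) → ℕ}
    (hb : StrictMono b) :
    coboundary (cone a) (Fin.snoc b (b (Fin.last N) + 1)) =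
      a (Fin.snoc b (b (Fin.last N) + 1)) := by
  have hinner : ∀ j : Fin N,
      cone a (Fin.snoc (fun k => b ((Fin.castSucc j).succAbove k)) (b (Fin.last N) + 1)) = 0 :=
    fun j => by
      obtain ⟨t, ht⟩ := Fin.exists_succAbove_eq (Fin.castSucc_lt_last j).ne'
      exact cone_snoc_eq_zero a (t := t) (by rw [ht])
  have hlast : cone a (Fin.snoc (fun k => b ((Fin.last N).succAbove k)) (b (Fin.last N) + 1)) =
      cone a b + (-1 : ℤ) ^ N • a (Fin.snoc b (b (Fin.last N) + 1)) := by
    have hinit : (fun k => b ((Fin.last N).succAbove k)) = Fin.init b :=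
      funext fun k => by rw [Fin.succAbove_last_apply]; rfl
    rw [hinit, cone_snoc_succ a (d := Fin.init b) fun t => hb (Fin.castSucc_lt_last t),
      Fin.snoc_init_self]
  rw [coboundary_snoc, coboundary, Fin.sum_univ_castSucc]
  simp only [hinner, smul_zero, sum_const_zero, zero_add, hlast, Fin.val_last]
  linear_combination (norm := module)
    (neg_one_pow_mul_neg_one_pow N) • a (Fin.snoc b (b (Fin.last N) + 1))

theorem coboundary_cone_sub_mem (J : ℕ → AddSubgroup M) (a : (Fin (N + 2) → ℕ) → M)
    (ha : ∀ i : Fin (N + 3) → ℕ, StrictMono i → coboundary a i ∈ J (i 0))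
    {i : Fin (N + 2) → ℕ} (hi : StrictMono i) :
    coboundary (cone a) i - a i ∈ J (i 0) := by
  obtain ⟨b, m, rfl⟩ : ∃ b m, Fin.snoc b m = i :=
    ⟨Fin.init i, i (Fin.last _), Fin.snoc_init_self i⟩
  have hb : StrictMono b := by simpa using hi.comp Fin.strictMono_castSucc
  have hm : b (Fin.last N) < m := by simpa using hi (Fin.castSucc_lt_last (Fin.last N))
  simp only [Fin.snoc_apply_zero]
  clear hi
  induction m, hm using Nat.le_induction with
  | base => rw [coboundary_cone_snoc_last_succ a hb, sub_self]; exact zero_mem _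
  | succ m hm ih =>
    have hbm : ∀ t, b t < m := fun t => (hb.monotone t.le_last).trans_lt hm
    rw [coboundary_cone_sub_snoc_succ a hbm]
    refine add_mem ih (zsmul_mem ?_ _)
    simpa using ha _ (Fin.strictMono_snoc (Fin.strictMono_snoc hb hm) (by simp))

end AlternatingCochain

theorem local_case_cocycles_are_coboundaries_general (p : ℕ) (hp : p.Prime)
    (J : ℕ → Ideal (Localization (primeComplZ p hp)))
    (n : ℕ) (hn : 0 < n)
    (a : (Fin (n + 1) → ℕ) → Localization (primeComplZ p hp))
    (ha : ∀ i : Fin (n + 2) → ℕ, StrictMono i →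
      (∑ j : Fin (n + 2), (-1 : ℤ) ^ (j : ℕ) • a (fun k => i (j.succAbove k)))
        ∈ J (i 0)) :
    ∃ x : (Fin n → ℕ) → Localization (primeComplZ p hp),
      ∀ i : Fin (n + 1) → ℕ, StrictMono i →
        (∑ j : Fin (n + 1), (-1 : ℤ) ^ (j : ℕ) • x (fun k => i (j.succAbove k))) - a i
          ∈ J (i 0) := by
  obtain ⟨N, rfl⟩ : ∃ N, n = N + 1 := ⟨n - 1, by omega⟩
  exact ⟨AlternatingCochain.cone a, fun i hi =>
    AlternatingCochain.coboundary_cone_sub_mem (fun k => (J k).toAddSubgroup) a ha hi⟩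

/-- **The local case.** Let `p` be prime, `R = ℤ_(p)` the localization of `ℤ` at
the prime ideal `(p)`, and `J : ℕ → Ideal R` a decreasing sequence of ideals.
If for every strictly increasing `(n+2)`-tuple `i₀ < ⋯ < i_{n+1}` of naturals the
alternating sum `∑ j, (-1)^j a(i₀,…,î_j,…,i_{n+1})` lies in `J i₀`, then there is
a family `x` on strictly increasing `n`-tuples such that for every strictly
increasing `(n+1)`-tuple `i₀ < ⋯ < iₙ`, the difference
`∑ j, (-1)^j x(i₀,…,î_j,…,iₙ) - a(i₀,…,iₙ)` lies in `J i₀`. -/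
theorem local_case_cocycles_are_coboundaries (p : ℕ) (hp : p.Prime)
    (J : ℕ → Ideal (Localization (primeComplZ p hp)))
    (hJ : ∀ m k : ℕ, m ≤ k → J k ≤ J m)
    (n : ℕ) (hn : 0 < n)
    (a : (Fin (n + 1) → ℕ) → Localization (primeComplZ p hp))
    (ha : ∀ i : Fin (n + 2) → ℕ, StrictMono i →
      (∑ j : Fin (n + 2), (-1 : ℤ) ^ (j : ℕ) • a (fun k => i (j.succAbove k)))
        ∈ J (i 0)) :
    ∃ x : (Fin n → ℕ) → Localization (primeComplZ p hp),
      ∀ i : Fin (n + 1) → ℕ, StrictMono i →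
        (∑ j : Fin (n + 1), (-1 : ℤ) ^ (j : ℕ) • x (fun k => i (j.succAbove k))) - a i
          ∈ J (i 0) :=
  local_case_cocycles_are_coboundaries_general p hp J n hn a ha
end

section
/- Let A be an abelian group, (A_i)_{i∈I} and (B_j)_{j∈J} two families of subgroups of A, and let τ, σ : J → I be two refinement maps, i.e. A_{τ(j)} ⊆ B_j and A_{σ(j)} ⊆ B_j for all j ∈ J. Let n be a nonnegative integer and let f be an n-cocycle for the family (A_i): a family of elements of A indexed by (n+1)-tuples of I with Σ_{k=0}^{n+1} (−1)^k f(i₀,…,î_k,…,i_{n+1}) ∈ A_{i₀} + ⋯ + A_{i_{n+1}} for all tuples. Then the difference of the two pulled-back cocycles is a coboundary for the family (B_j): there exists a family g of elements of A indexed by n-tuples of J such that for all j₀,…,jₙ ∈ J, f(σ(j₀),…,σ(jₙ)) − f(τ(j₀),…,τ(jₙ)) − Σ_{k=0}^{n} (−1)^k g(j₀,…,ĵ_k,…,jₙ) ∈ B_{j₀} + ⋯ + B_{jₙ}. -/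
/-!
The prism operator `h`, which sends `G` to
`(h G)(j₀, …, jₙ₋₁) = ∑ₘ (-1)ᵐ G(σ j₀, …, σ jₘ, τ jₘ, …, τ jₙ₋₁)`, is a chain homotopy:
`h δ + δ h = τ* - σ*`. Applied with `σ` and `τ` exchanged to the cocycle `f`, this gives
`σ* f - τ* f - δ (h f) = h (δ f)`, and `h (δ f) (j)` lies in `B_{j₀} + ⋯ + B_{jₙ}` because each
vertex of a prism simplex over `j` is `σ` or `τ` of a vertex of `j`.
-/

namespace Fin

lemma val_succAbove {n : ℕ} (p : Fin (n + 1)) (i : Fin n) :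
    (p.succAbove i : ℕ) = if (i : ℕ) < p then (i : ℕ) else (i : ℕ) + 1 := by
  unfold succAbove; split_ifs <;> simp_all [lt_def]

lemma val_predAbove {n : ℕ} (p : Fin n) (i : Fin (n + 1)) :
    (p.predAbove i : ℕ) = if (p : ℕ) < i then (i : ℕ) - 1 else (i : ℕ) := by
  simp only [predAbove, lt_def, val_castSucc, apply_dite Fin.val, val_pred, coe_castPred,
    dite_eq_ite]

end Fin

namespace CechCochain

variable {A I J : Type*} [AddCommGroup A]

def coboundary {n : ℕ} (F : (Fin n → I) → A) (i : Fin (n + 1) → I) : A :=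
  ∑ k : Fin (n + 1), (-1 : ℤ) ^ (k : ℕ) • F (i ∘ k.succAbove)

section Prism

variable (σ τ : J → I)

def splice (t : ℕ) {n : ℕ} (j : Fin n → J) (l : Fin n) : I :=
  if (l : ℕ) < t then σ (j l) else τ (j l)

/-- `splice σ τ (m + 1) (j ∘ m.predAbove)` is the tuple `(σ j₀, …, σ jₘ, τ jₘ, …, τ jₙ₋₁)`. -/
def prism {n : ℕ} (G : (Fin (n + 1) → I) → A) (j : Fin n → J) : A :=
  ∑ m : Fin n, (-1 : ℤ) ^ (m : ℕ) • G (splice σ τ (m + 1) (j ∘ m.predAbove))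

variable {σ τ}

lemma splice_zero {n : ℕ} (j : Fin n → J) : splice σ τ 0 j = τ ∘ j := by
  funext l; simp [splice]

lemma splice_of_le {n t : ℕ} (h : n ≤ t) (j : Fin n → J) : splice σ τ t j = σ ∘ j := by
  funext l; simp [splice, show (l : ℕ) < t by omega]

lemma splice_comp_castSucc_succAbove {n : ℕ} (m : Fin (n + 1)) (j : Fin (n + 1) → J) :
    splice σ τ (m + 1) (j ∘ m.predAbove) ∘ m.castSucc.succAbove = splice σ τ m j := by
  funext l
  simp only [splice, Function.comp_apply, Fin.val_succAbove, Fin.val_castSucc]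
  split_ifs <;> first
    | omega
    | (congr 2; ext
       simp only [Fin.val_succAbove, Fin.val_predAbove, Fin.val_castSucc]
       split_ifs <;> omega)

lemma splice_comp_succ_succAbove {n : ℕ} (m : Fin (n + 1)) (j : Fin (n + 1) → J) :
    splice σ τ (m + 1) (j ∘ m.predAbove) ∘ m.succ.succAbove = splice σ τ (m + 1) j := by
  funext l
  simp only [splice, Function.comp_apply, Fin.val_succAbove, Fin.val_succ]
  split_ifs <;> first
    | omega
    | (congr 2; ext
       simp only [Fin.val_succAbove, Fin.val_predAbove, Fin.val_succ]
       split_ifs <;> omega)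

lemma splice_comp_succAbove_succAbove {n : ℕ} (m : Fin (n + 1)) (k : Fin n)
    (j : Fin (n + 1) → J) :
    splice σ τ (m + 1) (j ∘ m.predAbove) ∘ (m.castSucc.succAbove (m.succAbove k)).succAbove =
      splice σ τ (k.predAbove m + 1)
        ((j ∘ (m.succAbove k).succAbove) ∘ (k.predAbove m).predAbove) := by
  funext l
  simp only [splice, Function.comp_apply, Fin.val_succAbove, Fin.val_predAbove,
    Fin.val_castSucc]
  split_ifs <;> first
    | omega
    | (congr 2; ext
       simp only [Fin.val_succAbove, Fin.val_predAbove, Fin.val_castSucc]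
       split_ifs <;> omega)

lemma neg_one_pow_castSucc_succAbove_succAbove {n : ℕ} (m : Fin (n + 1)) (k : Fin n) :
    (-1 : ℤ) ^ (m.castSucc.succAbove (m.succAbove k) : ℕ) = (-1) ^ (k : ℕ) := by
  simp only [Fin.val_succAbove, Fin.val_castSucc]
  split_ifs <;> first | rfl | omega

/-- Both sides index the ordered pairs of distinct elements of `Fin (n + 1)`: the pair
`(m, m.succAbove k)` is also `(r.succAbove p, r)` for `(p, r)` the image of `(m, k)`. -/
def predAboveSuccAboveEquiv (n : ℕ) : Fin (n + 1) × Fin n ≃ Fin n × Fin (n + 1) where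
  toFun x := (x.2.predAbove x.1, x.1.succAbove x.2)
  invFun y := (y.2.succAbove y.1, y.1.predAbove y.2)
  left_inv x := by simp [Fin.succAbove_succAbove_predAbove, Fin.predAbove_predAbove_succAbove]
  right_inv y := by simp [Fin.succAbove_succAbove_predAbove, Fin.predAbove_predAbove_succAbove]

/-- The faces `m.castSucc` and `m.succ` of the `m`-th prism simplex telescope in `m`; every
other face is a prism simplex over a face of `j`. -/
lemma neg_one_pow_smul_coboundary_splice {n : ℕ} (F : (Fin (n + 1) → I) → A)
    (j : Fin (n + 1) → J) (m : Fin (n + 1)) :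
    (-1 : ℤ) ^ (m : ℕ) • coboundary F (splice σ τ (m + 1) (j ∘ m.predAbove)) =
      F (splice σ τ m j) - F (splice σ τ (m + 1) j) +
        ∑ k : Fin n, (-1 : ℤ) ^ ((m : ℕ) + k) • F (splice σ τ (k.predAbove m + 1)
          ((j ∘ (m.succAbove k).succAbove) ∘ (k.predAbove m).predAbove)) := by
  rw [coboundary, Fin.sum_univ_succAbove _ m.castSucc, Fin.sum_univ_succAbove _ m,
    Fin.succAbove_castSucc_self, splice_comp_castSucc_succAbove, splice_comp_succ_succAbove]
  simp only [splice_comp_succAbove_succAbove, neg_one_pow_castSucc_succAbove_succAbove,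
    smul_add, Finset.smul_sum, smul_smul, ← pow_add, Fin.val_castSucc, Fin.val_succ]
  rw [← add_assoc (m : ℕ), pow_succ, Even.neg_one_pow ⟨m, rfl⟩, one_smul, one_mul,
    neg_one_smul, ← add_assoc, ← sub_eq_add_neg]

theorem prism_coboundary_add_coboundary_prism {n : ℕ} (F : (Fin (n + 1) → I) → A)
    (j : Fin (n + 1) → J) :
    prism σ τ (coboundary F) j + coboundary (prism σ τ F) j = F (τ ∘ j) - F (σ ∘ j) := by
  have hcross : ∑ m : Fin (n + 1), ∑ k : Fin n, (-1 : ℤ) ^ ((m : ℕ) + k) •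
      F (splice σ τ (k.predAbove m + 1)
        ((j ∘ (m.succAbove k).succAbove) ∘ (k.predAbove m).predAbove)) =
      -coboundary (prism σ τ F) j := by
    rw [← Fintype.sum_prod_type', Fintype.sum_equiv (predAboveSuccAboveEquiv n) _
      (fun y => -((-1 : ℤ) ^ ((y.2 : ℕ) + y.1) •
        F (splice σ τ (y.1 + 1) ((j ∘ y.2.succAbove) ∘ y.1.predAbove))))]
    · simp only [coboundary, prism, Finset.smul_sum, smul_smul, ← pow_add,
        Fintype.sum_prod_type, Finset.sum_neg_distrib]
      rw [Finset.sum_comm]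
    · rintro ⟨m, k⟩
      simp only [predAboveSuccAboveEquiv, Equiv.coe_fn_mk]
      rw [Fin.neg_one_pow_succAbove_add_predAbove, neg_smul, neg_neg]
  have htelescope : ∑ m : Fin (n + 1), (F (splice σ τ m j) - F (splice σ τ (m + 1) j)) =
      F (τ ∘ j) - F (σ ∘ j) := by
    rw [Fin.sum_univ_eq_sum_range (fun m => F (splice σ τ m j) - F (splice σ τ (m + 1) j)),
      Finset.sum_range_sub', splice_zero, splice_of_le le_rfl]
  rw [prism, Finset.sum_congr rfl fun m _ => neg_one_pow_smul_coboundary_splice F j m, Finset.sum_add_distrib, hcross, htelescope]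
  abel

lemma prism_mem_iSup {Ai : I → AddSubgroup A} {Bj : J → AddSubgroup A}
    (hσ : ∀ j, Ai (σ j) ≤ Bj j) (hτ : ∀ j, Ai (τ j) ≤ Bj j) {n : ℕ}
    {G : (Fin (n + 1) → I) → A} (hG : ∀ i, G i ∈ ⨆ k, Ai (i k)) (j : Fin n → J) :
    prism σ τ G j ∈ ⨆ k, Bj (j k) := by
  refine AddSubgroup.sum_mem _ fun m _ => AddSubgroup.zsmul_mem _ ?_ _
  refine (iSup_le fun l => ?_ : _ ≤ ⨆ k, Bj (j k)) (hG _)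
  unfold splice
  split_ifs
  exacts [(hσ _).trans (le_iSup (Bj ∘ j) _), (hτ _).trans (le_iSup (Bj ∘ j) _)]

end Prism

end CechCochain

open CechCochain

/-- **Two refinement maps induce the same map in cohomology.**
Let `(A_i)_{i∈I}` and `(B_j)_{j∈J}` be families of subgroups of an abelian group
`A`, and `τ, σ : J → I` refinement maps (`A_{τ j} ⊆ B_j` and `A_{σ j} ⊆ B_j`).
If `f` is an `n`-cocycle for `(A_i)`, then the difference of the two pullbacks
`σ*f - τ*f` is a coboundary for `(B_j)`. -/
theorem refinement_maps_cohomologous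
    {A : Type*} [AddCommGroup A] {I J : Type*}
    (Ai : I → AddSubgroup A) (Bj : J → AddSubgroup A)
    (τ σ : J → I) (hτ : ∀ j, Ai (τ j) ≤ Bj j) (hσ : ∀ j, Ai (σ j) ≤ Bj j)
    (n : ℕ) (f : (Fin (n + 1) → I) → A)
    (hf : ∀ i : Fin (n + 2) → I,
      (∑ k : Fin (n + 2), (-1 : ℤ) ^ (k : ℕ) • f (fun l => i (k.succAbove l)))
        ∈ ⨆ k, Ai (i k)) :
    ∃ g : (Fin n → J) → A, ∀ j : Fin (n + 1) → J,
      f (fun l => σ (j l)) - f (fun l => τ (j l))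
        - (∑ k : Fin (n + 1), (-1 : ℤ) ^ (k : ℕ) • g (fun l => j (k.succAbove l)))
        ∈ ⨆ k, Bj (j k) := by
  refine ⟨prism τ σ f, fun j => ?_⟩
  change f (σ ∘ j) - f (τ ∘ j) - coboundary (prism τ σ f) j ∈ _
  rw [← prism_coboundary_add_coboundary_prism, add_sub_cancel_right]
  exact prism_mem_iSup hτ hσ hf j
end

section
/- Let A be an abelian group, (A_i)_{i∈I} a family of subgroups, and n a positive integer. Let f be an n-cocycle: a family of elements of A indexed by (n+1)-tuples of I with Σ_{j=0}^{n+1} (−1)^j f(i₀,…,î_j,…,i_{n+1}) ∈ A_{i₀} + ⋯ + A_{i_{n+1}} for all tuples. Then f is cohomologous to an alternating cocycle: there exist a family g indexed by (n+1)-tuples and a family h indexed by n-tuples such that (1) g(i₀,…,iₙ) ∈ A_{i₀} + ⋯ + A_{iₙ} whenever the tuple (i₀,…,iₙ) has a repeated entry, (2) g(i_{π(0)},…,i_{π(n)}) ≡ sign(π) · g(i₀,…,iₙ) modulo A_{i₀} + ⋯ + A_{iₙ} for every permutation π of {0,…,n} and every tuple with pairwise distinct entries, (3) g is an n-cocycle,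 and (4) f(i₀,…,iₙ) − g(i₀,…,iₙ) − Σ_{j=0}^{n} (−1)^j h(i₀,…,î_j,…,iₙ) ∈ A_{i₀} + ⋯ + A_{iₙ} for all tuples. -/
/-!
Extend cochains linearly to the free `ℤ`-module on tuples, where the coboundary becomes dual to
the face boundary `∂`. After choosing a linear order on `I`, the alternator `alt` (a tuple with
distinct entries goes to its sorted rearrangement times the sign of the sorting permutation, any
other tuple to `0`) is a chain map, and coning off with the first entry builds a chain homotopy
`K` with `∂K + K∂ = id - alt`. Put `h := f ∘ K` and `g := f - δh = f ∘ alt + f ∘ ∂ ∘ K`. Since `K`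
only uses the entries of its argument, the cocycle condition places `f (∂ (K i))` in
`A_{i₀} + ⋯ + A_{iₙ}`, so modulo these subgroups `g` agrees with the alternating cochain `f ∘ alt`.
-/

open Equiv Finsupp

abbrev TupleChain (I : Type*) (m : ℕ) : Type _ := (Fin m → I) →₀ ℤ

namespace TupleChain

variable {I : Type*}

theorem linearMap_ext {M : Type*} [AddCommGroup M] {m : ℕ} {φ ψ : TupleChain I m →ₗ[ℤ] M}
    (h : ∀ t, φ (single t 1) = ψ (single t 1)) : φ = ψ :=
  lhom_ext' fun t => LinearMap.ext_ring (h t)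

noncomputable def boundary {m : ℕ} : TupleChain I (m + 1) →ₗ[ℤ] TupleChain I m :=
  Finsupp.lift _ ℤ _ fun t => ∑ j : Fin (m + 1), (-1 : ℤ) ^ (j : ℕ) • single (j.removeNth t) 1

theorem boundary_single {m : ℕ} (t : Fin (m + 1) → I) :
    boundary (single t 1) = ∑ j : Fin (m + 1), (-1 : ℤ) ^ (j : ℕ) • single (j.removeNth t) 1 := by
  simp [boundary]

theorem neg_one_pow_succAbove_mul_predAbove {m : ℕ} (j : Fin (m + 2)) (i : Fin (m + 1)) :
    (-1 : ℤ) ^ (j.succAbove i : ℕ) * (-1) ^ (i.predAbove j : ℕ) =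
      -((-1) ^ (j : ℕ) * (-1) ^ (i : ℕ)) := by
  rw [← pow_add, ← pow_add, neg_eq_neg_one_mul ((-1 : ℤ) ^ ((j : ℕ) + i)), ← pow_succ',
    neg_one_pow_eq_pow_mod_two, neg_one_pow_eq_pow_mod_two (n := (j : ℕ) + i + 1)]
  congr 1
  simp only [Fin.succAbove, Fin.predAbove, Fin.lt_def, apply_dite Fin.val, apply_ite Fin.val,
    Fin.val_castSucc, Fin.val_succ, Fin.val_pred, Fin.coe_castPred, dite_eq_ite]
  split_ifs <;> omega

theorem boundary_boundary {m : ℕ} (w : TupleChain I (m + 2)) : boundary (boundary w) = 0 := by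
  suffices h : boundary.comp boundary = (0 : TupleChain I (m + 2) →ₗ[ℤ] TupleChain I m) from
    LinearMap.congr_fun h w
  refine linearMap_ext fun t => ?_
  let F : Fin (m + 2) × Fin (m + 1) → TupleChain I m := fun p =>
    ((-1 : ℤ) ^ (p.1 : ℕ) * (-1) ^ (p.2 : ℕ)) • single (p.2.removeNth (p.1.removeNth t)) 1
  -- `(j, i)` and `(j.succAbove i, i.predAbove j)` delete the same two entries, with opposite signs
  let swapFaces : Equiv.Perm (Fin (m + 2) × Fin (m + 1)) :=
    Function.Involutive.toPerm (fun p => (p.1.succAbove p.2, p.2.predAbove p.1)) fun p => by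
      simp [Fin.succAbove_succAbove_predAbove, Fin.predAbove_predAbove_succAbove]
  have hF : ∀ p, F (swapFaces p) = -F p := fun ⟨j, i⟩ => by
    change ((-1 : ℤ) ^ (j.succAbove i : ℕ) * (-1) ^ (i.predAbove j : ℕ)) •
        single ((i.predAbove j).removeNth ((j.succAbove i).removeNth t)) 1 = -F (j, i)
    rw [← Fin.removeNth_removeNth_eq_swap, neg_one_pow_succAbove_mul_predAbove, neg_smul]
  have hsum : ∑ p, F p = -∑ p, F p := by
    rw [← Finset.sum_neg_distrib, ← Equiv.sum_comp swapFaces]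
    exact Finset.sum_congr rfl fun p _ => hF p
  simp only [LinearMap.comp_apply, boundary_single, map_sum, map_zsmul, Finset.smul_sum,
    smul_smul, LinearMap.zero_apply]
  rw [← Fintype.sum_prod_type']
  exact self_eq_neg.mp hsum

noncomputable def cone {m : ℕ} (a : I) : TupleChain I m →ₗ[ℤ] TupleChain I (m + 1) :=
  lmapDomain ℤ ℤ (Fin.cons (α := fun _ => I) a)

theorem cone_single {m : ℕ} (a : I) (t : Fin m → I) :
    cone a (single t 1) = single (Fin.cons a t) 1 := by
  simp [cone]

theorem boundary_cone {m : ℕ} (a : I) (w : TupleChain I (m + 1)) :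
    boundary (cone a w) = w - cone a (boundary w) := by
  suffices h : boundary.comp (cone a) = LinearMap.id - (cone a).comp boundary from
    LinearMap.congr_fun h w
  refine linearMap_ext fun t => ?_
  have hface : ∀ j : Fin (m + 1), j.succ.removeNth (Fin.cons a t : Fin (m + 2) → I) =
      Fin.cons a (j.removeNth t) := fun j => Fin.cons_comp_succ_succAbove a t j
  rw [LinearMap.comp_apply, LinearMap.sub_apply, LinearMap.id_apply, LinearMap.comp_apply,
    cone_single, boundary_single, boundary_single, map_sum, Fin.sum_univ_succ, Fin.removeNth_zero,
    Fin.tail_cons, Fin.val_zero, pow_zero, one_smul, sub_eq_add_neg, ← Finset.sum_neg_distrib]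
  simp only [hface, map_zsmul, cone_single, Fin.val_succ, pow_succ, mul_neg_one, neg_smul]

theorem exists_perm_succAbove {m : ℕ} (σ : Perm (Fin (m + 1))) (j : Fin (m + 1)) :
    ∃ ω : Perm (Fin m), (∀ x, σ (j.succAbove x) = (σ j).succAbove (ω x)) ∧
      (Perm.sign ω : ℤ) = (-1) ^ ((j : ℕ) + σ j) * Perm.sign σ := by
  set τ : Perm (Fin (m + 1)) := (σ j).cycleRange * σ * j.cycleRange⁻¹
  -- `τ` fixes `0`, so it permutes the remaining entries through some `ω`
  obtain ⟨⟨p, ω⟩, hτ⟩ : ∃ d, Perm.decomposeFin.symm d = τ := Perm.decomposeFin.symm.surjective τ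
  have hp : p = 0 := by simpa [τ, Perm.inv_def] using congrArg (· 0) hτ
  subst hp
  refine ⟨ω, fun x => ?_, ?_⟩
  · have hsucc := congrArg (· x.succ) hτ
    simp only [τ, Perm.inv_def, Perm.decomposeFin_symm_apply_succ, swap_self, refl_apply,
      Perm.mul_apply, Fin.cycleRange_symm_succ] at hsucc
    rw [← Fin.cycleRange_symm_succ (σ j), hsucc, symm_apply_apply]
  · have hsign := congrArg Perm.sign hτ
    simp only [τ, Perm.decomposeFin.symm_sign, if_pos, Perm.sign_mul, Perm.sign_inv,
      Fin.sign_cycleRange, one_mul] at hsign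
    rw [hsign]
    push_cast
    ring

section Alternation

variable [LinearOrder I]

noncomputable def altTuple {m : ℕ} (t : Fin m → I) : TupleChain I m :=
  if Function.Injective t then (Perm.sign (Tuple.sort t) : ℤ) • single (t ∘ Tuple.sort t) 1
  else 0

noncomputable def alt {m : ℕ} : TupleChain I m →ₗ[ℤ] TupleChain I m :=
  Finsupp.lift _ ℤ _ altTuple

theorem alt_single {m : ℕ} (t : Fin m → I) : alt (single t 1) = altTuple t := by
  simp [alt]

theorem altTuple_of_not_injective {m : ℕ} {t : Fin m → I} (ht : ¬Function.Injective t) :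
    altTuple t = 0 :=
  if_neg ht

theorem altTuple_of_strictMono {m : ℕ} {t : Fin m → I} (ht : StrictMono t) :
    altTuple t = single t 1 := by
  rw [altTuple, if_pos ht.injective, Tuple.sort_eq_refl_iff_monotone.2 ht.monotone]
  simp

theorem altTuple_comp_perm {m : ℕ} (t : Fin m → I) (σ : Perm (Fin m)) :
    altTuple (t ∘ σ) = (Perm.sign σ : ℤ) • altTuple t := by
  by_cases ht : Function.Injective t
  · have hsort : σ * Tuple.sort (t ∘ σ) = Tuple.sort t :=
      Equiv.ext fun x => ht (congrFun Tuple.comp_perm_comp_sort_eq_comp_sort x)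
    rw [altTuple, altTuple, if_pos (ht.comp σ.injective), if_pos ht,
      Tuple.comp_perm_comp_sort_eq_comp_sort, smul_smul, ← hsort, Perm.sign_mul, Units.val_mul,
      ← mul_assoc, ← Units.val_mul, Int.units_mul_self, Units.val_one, one_mul]
  · have htσ : ¬Function.Injective (t ∘ σ) := fun h => ht (by
      simpa [Function.comp_def] using h.comp σ.symm.injective)
    rw [altTuple_of_not_injective ht, altTuple_of_not_injective htσ, smul_zero]

theorem alt_boundary_comp_perm {m : ℕ} (t : Fin (m + 1) → I) (σ : Perm (Fin (m + 1))) :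
    alt (boundary (single (t ∘ σ) 1)) = (Perm.sign σ : ℤ) • alt (boundary (single t 1)) := by
  choose ω hω hsign using exists_perm_succAbove σ
  have hface : ∀ j, j.removeNth (t ∘ σ) = (σ j).removeNth t ∘ ω j :=
    fun j => funext fun x => congrArg t (hω j x)
  simp only [boundary_single, map_sum, map_zsmul, alt_single, hface, altTuple_comp_perm, hsign,
    smul_smul, Finset.smul_sum]
  conv_rhs => rw [← Equiv.sum_comp σ]
  refine Finset.sum_congr rfl fun j _ => ?_
  congr 1
  rw [pow_add, ← mul_assoc, ← mul_assoc, ← pow_add, ← two_mul, pow_mul]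
  simp [mul_comm]

theorem boundary_altTuple {m : ℕ} (t : Fin (m + 1) → I) :
    boundary (altTuple t) = alt (boundary (single t 1)) := by
  by_cases ht : Function.Injective t
  · set σ := Tuple.sort t
    have hs : StrictMono (t ∘ σ) :=
      (Tuple.monotone_sort t).strictMono_of_injective (ht.comp σ.injective)
    have hfaces : alt (boundary (single (t ∘ σ) 1)) = boundary (single (t ∘ σ) 1) := by
      have h : ∀ j : Fin (m + 1), altTuple (j.removeNth (t ∘ σ)) = single (j.removeNth (t ∘ σ)) 1 :=
        fun j => altTuple_of_strictMono (hs.comp (Fin.strictMono_succAbove j))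
      simp only [boundary_single, map_sum, map_zsmul, alt_single, h]
    calc boundary (altTuple t) = (Perm.sign σ : ℤ) • boundary (single (t ∘ σ) 1) := by
          rw [altTuple, if_pos ht, map_zsmul]
      _ = alt (boundary (single ((t ∘ σ) ∘ σ.symm) 1)) := by
          rw [alt_boundary_comp_perm, Perm.sign_symm, hfaces]
      _ = alt (boundary (single t 1)) := by
          simp [Function.comp_assoc]
  · obtain ⟨a, b, hab, hne⟩ := Function.not_injective_iff.1 ht
    have hswap : t ∘ swap a b = t := by
      ext x; rcases eq_or_ne x a with rfl | hxa
      · simp [hab]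
      · rcases eq_or_ne x b with rfl | hxb
        · simp [hab]
        · simp [swap_apply_of_ne_of_ne hxa hxb]
    -- swapping two equal entries fixes `t` but flips the sign
    have h := alt_boundary_comp_perm t (swap a b)
    rw [hswap, Perm.sign_swap hne, Units.val_neg, Units.val_one, neg_one_smul] at h
    rw [altTuple_of_not_injective ht, map_zero, self_eq_neg.mp h]

theorem boundary_alt {m : ℕ} (w : TupleChain I (m + 1)) : boundary (alt w) = alt (boundary w) := by
  suffices h : boundary.comp alt = alt.comp (boundary : TupleChain I (m + 1) →ₗ[ℤ] _) from
    LinearMap.congr_fun h w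
  exact linearMap_ext fun t => by
    simp only [LinearMap.comp_apply, alt_single, boundary_altTuple]

/-- `t - alt t - K (∂ t)` is a cycle, and `cone (t 0)` contracts cycles. -/
noncomputable def homotopy : (m : ℕ) → TupleChain I m →ₗ[ℤ] TupleChain I (m + 1)
  | 0 => 0
  | m + 1 => Finsupp.lift _ ℤ _ fun t =>
      cone (t 0) (single t 1 - altTuple t - homotopy m (boundary (single t 1)))

theorem homotopy_succ_single {m : ℕ} (t : Fin (m + 1) → I) :
    homotopy (m + 1) (single t 1) =
      cone (t 0) (single t 1 - altTuple t - homotopy m (boundary (single t 1))) := by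
  simp [homotopy]

theorem boundary_homotopy_add_of_boundary_eq_zero {m : ℕ}
    (h : ∀ t : Fin (m + 1) → I,
      boundary (single t 1 - altTuple t - homotopy m (boundary (single t 1))) = 0)
    (w : TupleChain I (m + 1)) :
    boundary (homotopy (m + 1) w) + homotopy m (boundary w) = w - alt w := by
  suffices H : boundary.comp (homotopy (m + 1)) + (homotopy m).comp boundary =
      LinearMap.id - alt from LinearMap.congr_fun H w
  refine linearMap_ext fun t => ?_
  simp only [LinearMap.add_apply, LinearMap.sub_apply, LinearMap.comp_apply, LinearMap.id_apply,
    homotopy_succ_single, boundary_cone, h t, map_zero, sub_zero, alt_single, sub_add_cancel]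

theorem boundary_single_sub_altTuple_sub_homotopy :
    ∀ {m : ℕ} (t : Fin (m + 1) → I),
      boundary (single t 1 - altTuple t - homotopy m (boundary (single t 1))) = 0
  | 0, t => by
    rw [altTuple_of_strictMono (Subsingleton.strictMono (α := Fin 1) t)]
    simp [homotopy]
  | m + 1, t => by
    have hK := boundary_homotopy_add_of_boundary_eq_zero boundary_single_sub_altTuple_sub_homotopy
      (boundary (single t 1))
    rw [boundary_boundary, map_zero, add_zero] at hK
    rw [map_sub, map_sub, hK, boundary_altTuple, sub_self]

theorem boundary_homotopy_add_homotopy_boundary {m : ℕ} (w : TupleChain I (m + 1)) :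
    boundary (homotopy (m + 1) w) + homotopy m (boundary w) = w - alt w :=
  boundary_homotopy_add_of_boundary_eq_zero boundary_single_sub_altTuple_sub_homotopy w

end Alternation

section Support

def supportedIn (S : Set I) (m : ℕ) : Submodule ℤ (TupleChain I m) :=
  supported ℤ ℤ {u | ∀ k, u k ∈ S}

variable {S : Set I}

theorem single_mem_supportedIn {m : ℕ} {u : Fin m → I} (hu : ∀ k, u k ∈ S) :
    single u 1 ∈ supportedIn S m :=
  single_mem_supported ℤ 1 hu

theorem apply_mem_of_mem_supportedIn {m : ℕ} {M : Type*} [AddCommGroup M]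
    {L : TupleChain I m →ₗ[ℤ] M} {p : Submodule ℤ M}
    (hL : ∀ u : Fin m → I, (∀ k, u k ∈ S) → L (single u 1) ∈ p) {w : TupleChain I m}
    (hw : w ∈ supportedIn S m) : L w ∈ p := by
  suffices h : supportedIn S m ≤ p.comap L from h hw
  rw [supportedIn, supported_eq_span_single, Submodule.span_le]
  rintro _ ⟨u, hu, rfl⟩
  exact hL u hu

theorem boundary_mem_supportedIn {m : ℕ} {w : TupleChain I (m + 1)}
    (hw : w ∈ supportedIn S (m + 1)) : boundary w ∈ supportedIn S m :=
  apply_mem_of_mem_supportedIn (fun u hu => by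
    rw [boundary_single]
    exact Submodule.sum_mem _ fun j _ =>
      Submodule.smul_mem _ _ (single_mem_supportedIn fun k => hu _)) hw

theorem cone_mem_supportedIn {m : ℕ} {a : I} (ha : a ∈ S) {w : TupleChain I m}
    (hw : w ∈ supportedIn S m) : cone a w ∈ supportedIn S (m + 1) :=
  apply_mem_of_mem_supportedIn (fun u hu => by
    rw [cone_single]
    exact single_mem_supportedIn (Fin.cases ha hu)) hw

variable [LinearOrder I]

theorem altTuple_mem_supportedIn {m : ℕ} {u : Fin m → I} (hu : ∀ k, u k ∈ S) :
    altTuple u ∈ supportedIn S m := by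
  unfold altTuple
  split_ifs
  · exact Submodule.smul_mem _ _ (single_mem_supportedIn fun k => hu _)
  · exact zero_mem _

theorem homotopy_mem_supportedIn :
    ∀ {m : ℕ} {w : TupleChain I m}, w ∈ supportedIn S m → homotopy m w ∈ supportedIn S (m + 1)
  | 0, _, _ => zero_mem _
  | _ + 1, _, hw => apply_mem_of_mem_supportedIn (fun u hu => by
      rw [homotopy_succ_single]
      exact cone_mem_supportedIn (hu 0) (sub_mem (sub_mem (single_mem_supportedIn hu)
        (altTuple_mem_supportedIn hu))
        (homotopy_mem_supportedIn (boundary_mem_supportedIn (single_mem_supportedIn hu))))) hw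

end Support

theorem mem_iSup_of_mem_supportedIn_range {A : Type*} [AddCommGroup A] (Ai : I → AddSubgroup A)
    {m p : ℕ} {L : TupleChain I m →ₗ[ℤ] A} (hL : ∀ u, L (single u 1) ∈ ⨆ k, Ai (u k))
    (i : Fin p → I) {w : TupleChain I m} (hw : w ∈ supportedIn (Set.range i) m) :
    L w ∈ ⨆ k, Ai (i k) := by
  refine apply_mem_of_mem_supportedIn (p := AddSubgroup.toIntSubmodule (⨆ k, Ai (i k)))
    (fun u hu => ?_) hw
  have hle : (⨆ k, Ai (u k)) ≤ ⨆ k, Ai (i k) := iSup_le fun k => by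
    obtain ⟨k', hk'⟩ := hu k
    rw [← hk']
    exact le_iSup (fun k => Ai (i k)) k'
  exact hle (hL u)

theorem apply_boundary_homotopy_mem [LinearOrder I] {A : Type*} [AddCommGroup A]
    (Ai : I → AddSubgroup A) {m : ℕ} {L : TupleChain I (m + 1) →ₗ[ℤ] A}
    (hL : ∀ u : Fin (m + 2) → I, L (boundary (single u 1)) ∈ ⨆ k, Ai (u k)) (u : Fin (m + 1) → I) :
    L (boundary (homotopy (m + 1) (single u 1))) ∈ ⨆ k, Ai (u k) :=
  mem_iSup_of_mem_supportedIn_range Ai (L := L ∘ₗ boundary) hL u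
    (homotopy_mem_supportedIn (single_mem_supportedIn fun k => ⟨k, rfl⟩))

theorem sum_neg_one_pow_smul_apply_single_removeNth {M : Type*} [AddCommGroup M] {m : ℕ}
    (L : TupleChain I m →ₗ[ℤ] M) (u : Fin (m + 1) → I) :
    ∑ j : Fin (m + 1), (-1 : ℤ) ^ (j : ℕ) • L (single (fun k => u (j.succAbove k)) 1) =
      L (boundary (single u 1)) := by
  simp only [boundary_single, map_sum, map_zsmul]
  rfl

end TupleChain

open TupleChain in
theorem cocycle_cohomologous_to_alternating_general
    {A : Type*} [AddCommGroup A] {I : Type*} (Ai : I → AddSubgroup A)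
    (n : ℕ) (f : (Fin (n + 1) → I) → A)
    (hf : ∀ i : Fin (n + 2) → I,
      (∑ j : Fin (n + 2), (-1 : ℤ) ^ (j : ℕ) • f (fun k => i (j.succAbove k)))
        ∈ ⨆ k, Ai (i k)) :
    ∃ (g : (Fin (n + 1) → I) → A) (h : (Fin n → I) → A),
      (∀ i : Fin (n + 1) → I, ¬ Function.Injective i → g i ∈ ⨆ k, Ai (i k)) ∧
      (∀ i : Fin (n + 1) → I, Function.Injective i →
        ∀ π : Equiv.Perm (Fin (n + 1)),
          g (fun k => i (π k)) - ((Equiv.Perm.sign π : ℤ) • g i) ∈ ⨆ k, Ai (i k)) ∧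
      (∀ i : Fin (n + 2) → I,
        (∑ j : Fin (n + 2), (-1 : ℤ) ^ (j : ℕ) • g (fun k => i (j.succAbove k)))
          ∈ ⨆ k, Ai (i k)) ∧
      (∀ i : Fin (n + 1) → I,
        f i - g i - (∑ j : Fin (n + 1), (-1 : ℤ) ^ (j : ℕ) • h (fun k => i (j.succAbove k)))
          ∈ ⨆ k, Ai (i k)) := by
  let _ : LinearOrder I := IsWellOrder.linearOrder WellOrderingRel
  set F : TupleChain I (n + 1) →ₗ[ℤ] A := Finsupp.lift A ℤ _ f
  have hF : ∀ u, F (single u 1) = f u := fun u => by simp [F]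
  have hFδ : ∀ u : Fin (n + 2) → I, F (boundary (single u 1)) ∈ ⨆ k, Ai (u k) := fun u => by
    simpa only [← sum_neg_one_pow_smul_apply_single_removeNth, hF] using hf u
  set H := F ∘ₗ homotopy n
  set G := F - H ∘ₗ boundary
  have hG : ∀ u, G (single u 1) - F (altTuple u) ∈ ⨆ k, Ai (u k) := fun u => by
    have hhom := congrArg F (boundary_homotopy_add_homotopy_boundary (single u 1))
    rw [map_add, map_sub, alt_single] at hhom
    convert apply_boundary_homotopy_mem Ai hFδ u using 1
    simp only [G, H, LinearMap.sub_apply, LinearMap.comp_apply]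
    rw [eq_sub_of_add_eq hhom, sub_right_comm]
  refine ⟨fun u => G (single u 1), fun t => H (single t 1), ?_, ?_, ?_, ?_⟩
  · intro i hi
    simpa [altTuple_of_not_injective hi] using hG i
  · intro i _ π
    have hiπ := hG (i ∘ π)
    rw [altTuple_comp_perm, map_zsmul, Function.comp_def,
      Equiv.iSup_comp (g := fun k => Ai (i k)) π] at hiπ
    convert sub_mem hiπ (zsmul_mem (hG i) (Equiv.Perm.sign π : ℤ)) using 1
    simp only [smul_sub, sub_sub_sub_cancel_right]
  · intro i
    rw [sum_neg_one_pow_smul_apply_single_removeNth G]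
    simpa [G, boundary_boundary] using hFδ i
  · intro i
    simp [sum_neg_one_pow_smul_apply_single_removeNth H, G, hF]

/-- **Every cocycle is cohomologous to an alternating cocycle.**
Let `(A_i)_{i∈I}` be a family of subgroups of an abelian group `A` and `n > 0`.
Any `n`-cocycle `f` is cohomologous (via a cochain `h`) to a cocycle `g` which is
alternating: `g` vanishes modulo `A_{i₀} + ⋯ + A_{iₙ}` on tuples with a repeated
entry, and `g(i∘π) ≡ sign(π) • g(i)` for every permutation `π` on tuples with
pairwise distinct entries. -/
theorem cocycle_cohomologous_to_alternating
    {A : Type*} [AddCommGroup A] {I : Type*} (Ai : I → AddSubgroup A)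
    (n : ℕ) (hn : 0 < n) (f : (Fin (n + 1) → I) → A)
    (hf : ∀ i : Fin (n + 2) → I,
      (∑ j : Fin (n + 2), (-1 : ℤ) ^ (j : ℕ) • f (fun k => i (j.succAbove k)))
        ∈ ⨆ k, Ai (i k)) :
    ∃ (g : (Fin (n + 1) → I) → A) (h : (Fin n → I) → A),
      (∀ i : Fin (n + 1) → I, ¬ Function.Injective i → g i ∈ ⨆ k, Ai (i k)) ∧
      (∀ i : Fin (n + 1) → I, Function.Injective i →
        ∀ π : Equiv.Perm (Fin (n + 1)),
          g (fun k => i (π k)) - ((Equiv.Perm.sign π : ℤ) • g i) ∈ ⨆ k, Ai (i k)) ∧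
      (∀ i : Fin (n + 2) → I,
        (∑ j : Fin (n + 2), (-1 : ℤ) ^ (j : ℕ) • g (fun k => i (j.succAbove k)))
          ∈ ⨆ k, Ai (i k)) ∧
      (∀ i : Fin (n + 1) → I,
        f i - g i - (∑ j : Fin (n + 1), (-1 : ℤ) ^ (j : ℕ) • h (fun k => i (j.succAbove k)))
          ∈ ⨆ k, Ai (i k)) :=
  cocycle_cohomologous_to_alternating_general Ai n f hf
end

section
/- Let A be an abelian group, (A_i)_{i∈I} a family of subgroups, and n a positive integer. Let g be an alternating n-cochain — g(i₀,…,iₙ) ∈ A_{i₀} + ⋯ + A_{iₙ} whenever the tuple has a repeated entry, and g(i_{π(0)},…,i_{π(n)}) ≡ sign(π) · g(i₀,…,iₙ) modulo A_{i₀} + ⋯ + A_{iₙ} for every permutation π of {0,…,n} — and suppose g is a coboundary: there is a family x indexed by n-tuples with Σ_{j=0}^{n} (−1)^j x(i₀,…,î_j,…,iₙ) − g(i₀,…,iₙ) ∈ A_{i₀} + ⋯ + A_{iₙ} for all tuples. Then g is the coboundary of an alternating cochain: there exists a family y indexed by n-tuples which vanishes modulo the corresponding subgroup sums on tuples with repeated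 entries, satisfies y(i∘π) ≡ sign(π)·y(i) modulo the corresponding subgroup sums for all permutations π, and Σ_{j=0}^{n} (−1)^j y(i₀,…,î_j,…,iₙ) − g(i₀,…,iₙ) ∈ A_{i₀} + ⋯ + A_{iₙ} for all tuples. -/
/-!
Fix a linear order on `I` and extend `x`, restricted to strictly increasing tuples, to the
alternating cochain `y` with `y (i ∘ π) = sign π • y i` that vanishes on tuples with a repeated
entry. Its coboundary `d y` is again alternating in this strict sense and agrees with `d x`, hence
with `g` modulo the subgroup sums, on strictly increasing tuples. So `d y - g` is alternating modulo
the subgroup sums and vanishes modulo them on strictly increasing tuples; sorting a tuple shows that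
it vanishes modulo them everywhere.
-/

open Function Equiv Equiv.Perm

lemma Fin.swap_castSucc_succ_comp_succAbove_castSucc {n : ℕ} (t : Fin n) :
    swap t.castSucc t.succ ∘ t.castSucc.succAbove = t.succ.succAbove := by
  ext k
  simp only [comp_apply, swap_apply_def, Fin.succAbove, Fin.lt_def, Fin.ext_iff,
    Fin.val_castSucc, Fin.val_succ]
  split_ifs <;> simp_all <;> omega

lemma Fin.exists_perm_apply_zero_apply_one {n : ℕ} {a b : Fin (n + 2)} (hab : a ≠ b) :
    ∃ π : Perm (Fin (n + 2)), π 0 = a ∧ π 1 = b := by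
  have hb : swap 0 a b ≠ 0 := fun h => hab (by simpa using congrArg (swap 0 a) h.symm)
  refine ⟨swap 0 a * swap 1 (swap 0 a b), ?_, ?_⟩
  · rw [mul_apply, swap_apply_of_ne_of_ne Fin.zero_ne_one' hb.symm, swap_apply_left]
  · rw [mul_apply, swap_apply_left, swap_apply_self]

namespace Cochain

variable {A : Type*} [AddCommGroup A] {I : Type*} {n : ℕ}

def coboundary (x : (Fin n → I) → A) (i : Fin (n + 1) → I) : A :=
  ∑ j : Fin (n + 1), (-1 : ℤ) ^ (j : ℕ) • x (i ∘ j.succAbove)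

section Alternating

variable (y : (Fin n → I) → A)

lemma coboundary_comp_swap_castSucc_succ
    (hperm : ∀ (i : Fin n → I) (π : Perm (Fin n)), y (i ∘ π) = (sign π : ℤ) • y i)
    (t : Fin n) (i : Fin (n + 1) → I) :
    coboundary y (i ∘ swap t.castSucc t.succ) = -coboundary y i := by
  set τ := swap t.castSucc t.succ with hτ
  have hττ : τ ∘ τ = id := by rw [hτ, ← coe_mul, swap_mul_self, coe_one]
  -- `τ` exchanges the faces omitting `t.castSucc` and `t.succ`, whose signs differ by one factor
  -- of `-1`, and acts on the vertices of every other face as a transposition.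
  have hterm : ∀ j : Fin (n + 1), (-1 : ℤ) ^ (j : ℕ) • y (i ∘ τ ∘ j.succAbove)
      = -((-1 : ℤ) ^ (τ j : ℕ) • y (i ∘ (τ j).succAbove)) := by
    intro j
    rcases eq_or_ne j t.castSucc with rfl | hjc
    · rw [swap_apply_left, Fin.swap_castSucc_succ_comp_succAbove_castSucc, Fin.val_succ, pow_succ]
      simp
    rcases eq_or_ne j t.succ with rfl | hjs
    · rw [swap_apply_right, ← Fin.swap_castSucc_succ_comp_succAbove_castSucc, ← comp_assoc τ,
        hττ, id_comp, Fin.val_succ, pow_succ]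
      simp
    obtain ⟨a, ha⟩ := Fin.exists_succAbove_eq hjc.symm
    obtain ⟨b, hb⟩ := Fin.exists_succAbove_eq hjs.symm
    have hab : a ≠ b := by rintro rfl; exact (Fin.castSucc_lt_succ (i := t)).ne (ha.symm.trans hb)
    have hcomm : τ ∘ j.succAbove = j.succAbove ∘ swap a b := by
      rw [hτ, ← ha, ← hb]; exact Fin.succAbove_right_injective.swap_comp a b
    rw [swap_apply_of_ne_of_ne hjc hjs, hcomm, ← comp_assoc, hperm, sign_swap hab]
    simp
  calc coboundary y (i ∘ τ)
      = ∑ j, -((-1 : ℤ) ^ (τ j : ℕ) • y (i ∘ (τ j).succAbove)) :=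
        Finset.sum_congr rfl fun j _ => hterm j
    _ = -coboundary y i := by
        rw [Finset.sum_neg_distrib,
          Equiv.sum_comp τ fun j => (-1 : ℤ) ^ (j : ℕ) • y (i ∘ j.succAbove)]
        rfl

lemma coboundary_comp_perm
    (hperm : ∀ (i : Fin n → I) (π : Perm (Fin n)), y (i ∘ π) = (sign π : ℤ) • y i)
    (π : Perm (Fin (n + 1))) (i : Fin (n + 1) → I) :
    coboundary y (i ∘ π) = (sign π : ℤ) • coboundary y i := by
  have hπ : π ∈ Submonoid.closure (Set.range fun t : Fin n => swap t.castSucc t.succ) := by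
    rw [mclosure_swap_castSucc_succ]; exact Submonoid.mem_top π
  induction hπ using Submonoid.closure_induction generalizing i with
  | mem σ hσ =>
    obtain ⟨t, rfl⟩ := hσ
    rw [coboundary_comp_swap_castSucc_succ y hperm, sign_swap (Fin.castSucc_lt_succ (i := t)).ne]
    simp
  | one => simp
  | mul σ ρ _ _ hσ hρ =>
    rw [coe_mul, ← comp_assoc, hρ, hσ, smul_smul, map_mul, Units.val_mul, mul_comm]

end Alternating

lemma coboundary_eq_zero_of_apply_zero_eq_apply_one (y : (Fin (n + 1) → I) → A)
    (hzero : ∀ i : Fin (n + 1) → I, ¬ Injective i → y i = 0)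
    (i : Fin (n + 2) → I) (h01 : i 0 = i 1) : coboundary y i = 0 := by
  -- The faces omitting `0` and `1` coincide and cancel; every other face repeats `i 0 = i 1`.
  have hface : ∀ j : Fin n, y (i ∘ j.succ.succ.succAbove) = 0 := by
    intro j
    have : NeZero n := ⟨j.pos.ne'⟩
    refine hzero _ fun hinj => Fin.zero_ne_one' (hinj ?_)
    simp [h01]
  have hface01 : i ∘ (0 : Fin (n + 1)).succ.succAbove = i ∘ (0 : Fin (n + 2)).succAbove := by
    ext k
    cases k using Fin.cases <;> simp [h01]
  rw [coboundary, Fin.sum_univ_succ, Fin.sum_univ_succ, hface01]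
  simp [hface]

lemma coboundary_eq_zero_of_not_injective (y : (Fin n → I) → A)
    (hzero : ∀ i : Fin n → I, ¬ Injective i → y i = 0)
    (hperm : ∀ (i : Fin n → I) (π : Perm (Fin n)), y (i ∘ π) = (sign π : ℤ) • y i)
    {i : Fin (n + 1) → I} (hi : ¬ Injective i) : coboundary y i = 0 := by
  obtain ⟨a, b, hiab, hab⟩ := not_injective_iff.mp hi
  cases n with
  | zero => exact absurd (Subsingleton.elim (α := Fin 1) a b) hab
  | succ n =>
    obtain ⟨π, hπa, hπb⟩ := Fin.exists_perm_apply_zero_apply_one hab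
    have h := coboundary_comp_perm y hperm π i
    rw [coboundary_eq_zero_of_apply_zero_eq_apply_one y hzero (i ∘ π) (by simpa [hπa, hπb]),
      eq_comm, ← Units.smul_def, smul_eq_zero_iff_eq] at h
    exact h

section LinearOrder

variable [LinearOrder I]

open Classical in
noncomputable def alternatingExtension (x : (Fin n → I) → A) (i : Fin n → I) : A :=
  if Injective i then (sign (Tuple.sort i) : ℤ) • x (i ∘ Tuple.sort i) else 0

variable (x : (Fin n → I) → A)

lemma alternatingExtension_of_not_injective {i : Fin n → I} (hi : ¬ Injective i) :
    alternatingExtension x i = 0 := by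
  rw [alternatingExtension, if_neg hi]

lemma alternatingExtension_of_strictMono {i : Fin n → I} (hi : StrictMono i) :
    alternatingExtension x i = x i := by
  rw [alternatingExtension, if_pos hi.injective,
    Tuple.sort_eq_refl_iff_monotone.mpr hi.monotone]
  simp

lemma alternatingExtension_comp_perm (i : Fin n → I) (π : Perm (Fin n)) :
    alternatingExtension x (i ∘ π) = (sign π : ℤ) • alternatingExtension x i := by
  by_cases hi : Injective i
  · have hsort : Tuple.sort (i ∘ π) = π⁻¹ * Tuple.sort i := by
      ext k
      have h := congrFun (Tuple.comp_perm_comp_sort_eq_comp_sort (σ := π) (f := i)) k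
      simp [← hi h]
    rw [alternatingExtension, alternatingExtension, if_pos (hi.comp π.injective), if_pos hi,
      Tuple.comp_perm_comp_sort_eq_comp_sort, hsort, map_mul, sign_inv, Units.val_mul, mul_smul]
  · have hiπ : ¬ Injective (i ∘ π) := fun h => hi (by simpa using h.comp π.symm.injective)
    rw [alternatingExtension_of_not_injective x hi,
      alternatingExtension_of_not_injective x hiπ, smul_zero]

lemma coboundary_alternatingExtension_of_strictMono {i : Fin (n + 1) → I} (hi : StrictMono i) :
    coboundary (alternatingExtension x) i = coboundary x i :=
  Finset.sum_congr rfl fun j _ => by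
    rw [alternatingExtension_of_strictMono x (hi.comp (Fin.strictMono_succAbove j))]

lemma mem_iSup_of_strictMono_of_alternating (Ai : I → AddSubgroup A) (f : (Fin n → I) → A)
    (hrep : ∀ i : Fin n → I, ¬ Injective i → f i ∈ ⨆ k, Ai (i k))
    (hperm : ∀ (i : Fin n → I) (π : Perm (Fin n)), f (i ∘ π) - (sign π : ℤ) • f i ∈ ⨆ k, Ai (i k))
    (hmono : ∀ i : Fin n → I, StrictMono i → f i ∈ ⨆ k, Ai (i k)) (i : Fin n → I) :
    f i ∈ ⨆ k, Ai (i k) := by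
  by_cases hi : Injective i
  · set σ := Tuple.sort i
    have hsorted : f (i ∘ σ) ∈ ⨆ k, Ai (i k) := by
      rw [← Equiv.iSup_comp (g := fun k => Ai (i k)) σ]
      exact hmono _ ((Tuple.monotone_sort i).strictMono_of_injective (hi.comp σ.injective))
    have hσ : (sign σ : ℤ) • f i ∈ ⨆ k, Ai (i k) := by
      simpa using sub_mem hsorted (hperm i σ)
    have hσσ : (sign σ : ℤ) • (sign σ : ℤ) • f i = f i := by
      rw [smul_smul, ← Units.val_mul, Int.units_mul_self, Units.val_one, one_smul]
    rw [← hσσ]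
    exact AddSubgroup.zsmul_mem _ hσ _
  · exact hrep i hi

end LinearOrder

end Cochain

open Cochain in
theorem alternating_coboundary_of_alternating_general
    {A : Type*} [AddCommGroup A] {I : Type*} (Ai : I → AddSubgroup A)
    (n : ℕ) (g : (Fin (n + 1) → I) → A)
    (hrep : ∀ i : Fin (n + 1) → I, ¬ Function.Injective i → g i ∈ ⨆ k, Ai (i k))
    (halt : ∀ (i : Fin (n + 1) → I) (π : Equiv.Perm (Fin (n + 1))),
      g (fun k => i (π k)) - ((Equiv.Perm.sign π : ℤ) • g i) ∈ ⨆ k, Ai (i k))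
    (hcob : ∃ x : (Fin n → I) → A, ∀ i : Fin (n + 1) → I,
      (∑ j : Fin (n + 1), (-1 : ℤ) ^ (j : ℕ) • x (fun k => i (j.succAbove k))) - g i
        ∈ ⨆ k, Ai (i k)) :
    ∃ y : (Fin n → I) → A,
      (∀ i : Fin n → I, ¬ Function.Injective i → y i ∈ ⨆ k, Ai (i k)) ∧
      (∀ (i : Fin n → I) (π : Equiv.Perm (Fin n)),
        y (fun k => i (π k)) - ((Equiv.Perm.sign π : ℤ) • y i) ∈ ⨆ k, Ai (i k)) ∧
      (∀ i : Fin (n + 1) → I,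
        (∑ j : Fin (n + 1), (-1 : ℤ) ^ (j : ℕ) • y (fun k => i (j.succAbove k))) - g i
          ∈ ⨆ k, Ai (i k)) := by
  let : LinearOrder I := IsWellOrder.linearOrder WellOrderingRel
  obtain ⟨x, hx⟩ := hcob
  set y := alternatingExtension x
  have hzero : ∀ i : Fin n → I, ¬ Injective i → y i = 0 :=
    fun _ hi => alternatingExtension_of_not_injective x hi
  have hperm : ∀ (i : Fin n → I) (π : Perm (Fin n)), y (i ∘ π) = (sign π : ℤ) • y i :=
    alternatingExtension_comp_perm x
  refine ⟨y, fun i hi => by simp [hzero i hi], fun i π => by simp [← comp_def, hperm], ?_⟩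
  refine mem_iSup_of_strictMono_of_alternating Ai (fun i => coboundary y i - g i) ?_ ?_ ?_
  · intro i hi
    rw [coboundary_eq_zero_of_not_injective y hzero hperm hi, zero_sub]
    exact neg_mem (hrep i hi)
  · intro i π
    convert neg_mem (halt i π) using 1
    change coboundary y (i ∘ π) - g (i ∘ π) - _ = -(g (i ∘ π) - _)
    rw [coboundary_comp_perm y hperm, smul_sub]
    abel
  · intro i hi
    rw [coboundary_alternatingExtension_of_strictMono x hi]
    exact hx i

/-- **An alternating coboundary is the coboundary of an alternating cochain.**
Let `(A_i)_{i∈I}` be a family of subgroups of an abelian group `A` and `n > 0`.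
If `g` is an alternating `n`-cochain (vanishing modulo `A_{i₀} + ⋯ + A_{iₙ}` on
tuples with a repeated entry, with `g(i∘π) ≡ sign(π) • g(i)` for every
permutation `π`) which is the coboundary of some cochain `x`, then `g` is the
coboundary of an alternating cochain `y`. -/
theorem alternating_coboundary_of_alternating
    {A : Type*} [AddCommGroup A] {I : Type*} (Ai : I → AddSubgroup A)
    (n : ℕ) (hn : 0 < n) (g : (Fin (n + 1) → I) → A)
    (hrep : ∀ i : Fin (n + 1) → I, ¬ Function.Injective i → g i ∈ ⨆ k, Ai (i k))
    (halt : ∀ (i : Fin (n + 1) → I) (π : Equiv.Perm (Fin (n + 1))),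
      g (fun k => i (π k)) - ((Equiv.Perm.sign π : ℤ) • g i) ∈ ⨆ k, Ai (i k))
    (hcob : ∃ x : (Fin n → I) → A, ∀ i : Fin (n + 1) → I,
      (∑ j : Fin (n + 1), (-1 : ℤ) ^ (j : ℕ) • x (fun k => i (j.succAbove k))) - g i
        ∈ ⨆ k, Ai (i k)) :
    ∃ y : (Fin n → I) → A,
      (∀ i : Fin n → I, ¬ Function.Injective i → y i ∈ ⨆ k, Ai (i k)) ∧
      (∀ (i : Fin n → I) (π : Equiv.Perm (Fin n)),
        y (fun k => i (π k)) - ((Equiv.Perm.sign π : ℤ) • y i) ∈ ⨆ k, Ai (i k)) ∧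
      (∀ i : Fin (n + 1) → I,
        (∑ j : Fin (n + 1), (-1 : ℤ) ^ (j : ℕ) • y (fun k => i (j.succAbove k))) - g i
          ∈ ⨆ k, Ai (i k)) :=
  alternating_coboundary_of_alternating_general Ai n g hrep halt hcob
end
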